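/- arXiv:2510.26176 — 5 statements merged into one kernel-verified Lean document; each statement's English description precedes it below -/
import Mathlib

section
/- The Morse complex of a disjoint union of two connected simplicial complexes, each containing at least one edge, equals the join of their Morse complexes: M(K ⊔ L) = M(K) * M(L). -/
/-- An abstract simplicial complex on vertex type `V`: a collection of nonempty
finite subsets of `V` closed under passing to nonempty subsets. -/
structure ASC (V : Type*) where
  faces : Set (Finset V)
  nonempty_of_mem : ∀ {s : Finset V}, s ∈ faces → s.Nonempty
  down_closed : ∀ {s t : Finset V}, s ∈ faces → t ⊆ s → t.Nonempty → t ∈ faces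

namespace ASC

variable {V W : Type*}

/-- A facet is a maximal face. -/
def IsFacet (K : ASC V) (s : Finset V) : Prop :=
  s ∈ K.faces ∧ ∀ t ∈ K.faces, s ⊆ t → s = t

/-- `v` dominates `v'` if every facet containing `v'` also contains `v`. -/
def Dominates (K : ASC V) (v v' : V) : Prop :=
  v ≠ v' ∧ ∀ F, K.IsFacet F → v' ∈ F → v ∈ F

/-- Deletion of a vertex. -/
def delete (K : ASC V) (v' : V) : ASC V where
  faces := {s ∈ K.faces | v' ∉ s}
  nonempty_of_mem h := K.nonempty_of_mem h.1
  down_closed hs hts htne := ⟨K.down_closed hs.1 hts htne, fun hmem => hs.2 (hts hmem)⟩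

/-- The complex consisting of a single point. -/
def point (p : V) : ASC V where
  faces := {{p}}
  nonempty_of_mem h := by simp only [Set.mem_singleton_iff] at h; subst h; exact ⟨p, by simp⟩
  down_closed := by
    intro s t hs hts htne
    simp only [Set.mem_singleton_iff] at *
    subst hs
    rcases Finset.subset_singleton_iff.mp hts with h | h
    · exact absurd h (Finset.nonempty_iff_ne_empty.mp htne)
    · exact h

/-- Elementary strong collapses from `K` to `L`. -/
inductive StrongCollapsesTo : ASC V → ASC V → Prop
  | refl (K : ASC V) : StrongCollapsesTo K K
  | step {K L : ASC V} (v v' : V) : K.Dominates v v' →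
      StrongCollapsesTo (K.delete v') L → StrongCollapsesTo K L

/-- A complex is strongly collapsible if it strong collapses to a point. -/
def StronglyCollapsible (K : ASC V) : Prop :=
  ∃ p : V, StrongCollapsesTo K (ASC.point p)

/-- Elementary collapses (free face removals) from `K` to `L`. -/
inductive CollapsesTo : ASC V → ASC V → Prop
  | refl (K : ASC V) : CollapsesTo K K
  | step {K L M : ASC V} (σ τ : Finset V) :
      σ ∈ K.faces → τ ∈ K.faces → σ ⊂ τ →
      (∀ ρ ∈ K.faces, σ ⊂ ρ → ρ = τ) →
      L.faces = K.faces \ {σ, τ} →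
      CollapsesTo L M → CollapsesTo K M

/-- A complex is collapsible if it collapses to a point. -/
def Collapsible (K : ASC V) : Prop :=
  ∃ p : V, CollapsesTo K (ASC.point p)

/-- The image complex along a vertex map. -/
def map [DecidableEq W] (f : V → W) (K : ASC V) : ASC W where
  faces := (Finset.image f) '' K.faces
  nonempty_of_mem := by
    rintro s ⟨t, ht, rfl⟩
    exact (K.nonempty_of_mem ht).image f
  down_closed := by
    rintro s t ⟨u, hu, rfl⟩ hts htne
    obtain ⟨w, hw, rfl⟩ := Finset.subset_image_iff.mp hts
    exact ⟨w, K.down_closed hu hw (Finset.image_nonempty.mp htne), rfl⟩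

/-- The join of two complexes on a common vertex type (intended for complexes
with disjoint vertex sets). -/
def join [DecidableEq V] (A B : ASC V) : ASC V where
  faces := A.faces ∪ B.faces ∪ {s | ∃ a ∈ A.faces, ∃ b ∈ B.faces, s = a ∪ b}
  nonempty_of_mem := by
    rintro s (⟨h | h⟩ | ⟨a, ha, b, hb, rfl⟩)
    · exact A.nonempty_of_mem h
    · exact B.nonempty_of_mem h
    · exact (A.nonempty_of_mem ha).mono Finset.subset_union_left
  down_closed := by
    rintro s t (⟨h | h⟩ | ⟨a, ha, b, hb, rfl⟩) hts htne
    · exact Or.inl (Or.inl (A.down_closed h hts htne))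
    · exact Or.inl (Or.inr (B.down_closed h hts htne))
    · by_cases hta : (t ∩ a).Nonempty
      · by_cases htb : (t \ a).Nonempty
        · refine Or.inr ⟨t ∩ a, A.down_closed ha Finset.inter_subset_right hta,
            t \ a, B.down_closed hb ?_ htb, by ext x; simp only [Finset.mem_union, Finset.mem_inter, Finset.mem_sdiff]; tauto⟩
          intro x hx
          rcases Finset.mem_union.mp (hts (Finset.mem_sdiff.mp hx).1) with h1 | h1
          · exact absurd h1 (Finset.mem_sdiff.mp hx).2
          · exact h1
        · refine Or.inl (Or.inl (A.down_closed ha ?_ htne))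
          intro x hx
          by_contra hxa
          exact htb ⟨x, Finset.mem_sdiff.mpr ⟨hx, hxa⟩⟩
      · refine Or.inl (Or.inr (B.down_closed hb ?_ htne))
        intro x hx
        rcases Finset.mem_union.mp (hts hx) with h1 | h1
        · exact absurd ⟨x, Finset.mem_inter.mpr ⟨hx, h1⟩⟩ hta
        · exact h1

/-- Disjoint union of two complexes. -/
def disjUnion [DecidableEq V] [DecidableEq W] (K : ASC V) (L : ASC W) : ASC (V ⊕ W) where
  faces := (K.map Sum.inl).faces ∪ (L.map Sum.inr).faces
  nonempty_of_mem := by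
    rintro s (h | h)
    · exact (K.map Sum.inl).nonempty_of_mem h
    · exact (L.map Sum.inr).nonempty_of_mem h
  down_closed := by
    rintro s t (h | h) hts htne
    · exact Or.inl ((K.map Sum.inl).down_closed h hts htne)
    · exact Or.inr ((L.map Sum.inr).down_closed h hts htne)

/-- Connectivity of a complex via edge paths. -/
def Connected [DecidableEq V] (K : ASC V) : Prop :=
  ∀ u v : V, {u} ∈ K.faces → {v} ∈ K.faces →
    ∃ (k : ℕ) (c : ℕ → V), c 0 = u ∧ c k = v ∧
      ∀ i < k, ({c i, c (i + 1)} : Finset V) ∈ K.faces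

/-- A flag complex: every set of pairwise adjacent vertices spans a simplex. -/
def IsFlag [DecidableEq V] (K : ASC V) : Prop :=
  ∀ s : Finset V, s.Nonempty → (∀ v ∈ s, ({v} : Finset V) ∈ K.faces) →
    (∀ u ∈ s, ∀ v ∈ s, u ≠ v → ({u, v} : Finset V) ∈ K.faces) → s ∈ K.faces

/-- A tree: a connected `1`-dimensional complex with no (injective) cycles. -/
def IsTree [DecidableEq V] (K : ASC V) : Prop :=
  (∀ s ∈ K.faces, s.card ≤ 2) ∧ K.Connected ∧
    ¬ ∃ (k : ℕ) (c : ℕ → V), 3 ≤ k ∧ (∀ i < k, ∀ j < k, c i = c j → i = j) ∧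
      (∀ i < k, ({c i, c (i + 1)} : Finset V) ∈ K.faces) ∧ c k = c 0

/-- The star of a vertex. -/
def star [DecidableEq V] (K : ASC V) (v : V) : ASC V where
  faces := {s ∈ K.faces | insert v s ∈ K.faces}
  nonempty_of_mem h := K.nonempty_of_mem h.1
  down_closed := by
    rintro s t ⟨hs, hvs⟩ hts htne
    exact ⟨K.down_closed hs hts htne,
      K.down_closed hvs (Finset.insert_subset_insert v hts) (Finset.insert_nonempty v t)⟩

/-- The star cluster of a simplex. -/
def starCluster [DecidableEq V] (K : ASC V) (σ : Finset V) : ASC V where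
  faces := ⋃ v ∈ σ, (K.star v).faces
  nonempty_of_mem := by
    rintro s hs
    simp only [Set.mem_iUnion] at hs
    obtain ⟨v, _, hv⟩ := hs
    exact (K.star v).nonempty_of_mem hv
  down_closed := by
    intro s t hs hts htne
    simp only [Set.mem_iUnion] at *
    obtain ⟨v, hvσ, hv⟩ := hs
    exact ⟨v, hvσ, (K.star v).down_closed hv hts htne⟩

end ASC

/-- A nontrivial closed V-path for a discrete vector field. -/
def hasClosedPath {V : Type*} (S : Set (Finset V × Finset V)) : Prop :=
  ∃ (k : ℕ) (α β : ℕ → Finset V), 0 < k ∧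
    (∀ i < k, (α i, β i) ∈ S ∧ α (i + 1) ⊆ β i ∧
      (β i).card = (α (i + 1)).card + 1 ∧ α (i + 1) ≠ α i) ∧
    α k = α 0

theorem hasClosedPath.mono {V : Type*} {S T : Set (Finset V × Finset V)}
    (h : hasClosedPath S) (hST : S ⊆ T) : hasClosedPath T := by
  obtain ⟨k, α, β, hk, hstep, hcl⟩ := h
  exact ⟨k, α, β, hk, fun i hi => ⟨hST (hstep i hi).1, (hstep i hi).2.1,
    (hstep i hi).2.2.1, (hstep i hi).2.2.2⟩, hcl⟩

/-- A discrete vector field on a collection `C` of simplices: codimension-one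
pairs from `C` with each simplex occurring in at most one pair. -/
def IsMatching {V : Type*} (C : Set (Finset V)) (M : Set (Finset V × Finset V)) : Prop :=
  (∀ p ∈ M, p.1 ∈ C ∧ p.2 ∈ C ∧ p.1 ⊆ p.2 ∧ p.2.card = p.1.card + 1) ∧
  (∀ p ∈ M, ∀ q ∈ M, p ≠ q → p.1 ≠ q.1 ∧ p.1 ≠ q.2 ∧ p.2 ≠ q.1 ∧ p.2 ≠ q.2)

/-- An acyclic matching: a discrete vector field with no nontrivial closed V-path. -/
def IsAcyclicMatching {V : Type*} (C : Set (Finset V)) (M : Set (Finset V × Finset V)) : Prop :=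
  IsMatching C M ∧ ¬ hasClosedPath M

/-- A gradient vector field on a complex `K`. -/
def IsGVF {V : Type*} (K : ASC V) (S : Set (Finset V × Finset V)) : Prop :=
  IsAcyclicMatching K.faces S

theorem IsGVF.mono {V : Type*} {K : ASC V} {S T : Set (Finset V × Finset V)}
    (h : IsGVF K T) (hST : S ⊆ T) : IsGVF K S :=
  ⟨⟨fun p hp => h.1.1 p (hST hp), fun p hp q hq => h.1.2 p (hST hp) q (hST hq)⟩,
    fun hc => h.2 (hc.mono hST)⟩

/-- The Morse complex of `K`: vertices are primitive gradient vector fields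
(codimension-one pairs), faces are gradient vector fields. -/
def MorseComplex {V : Type*} (K : ASC V) : ASC (Finset V × Finset V) where
  faces := {s | s.Nonempty ∧ IsGVF K ↑s}
  nonempty_of_mem h := h.1
  down_closed := by
    intro s t hs hts htne
    exact ⟨htne, hs.2.mono (Finset.coe_subset.mpr hts)⟩

section Spaces

/-- The geometric realization of a complex on a finite vertex type. -/
abbrev ASC.realization {V : Type*} [Fintype V] (K : ASC V) : Type _ :=
  {f : V → ℝ // (∀ v, 0 ≤ f v) ∧ (∑ v, f v) = 1 ∧ ∃ s ∈ K.faces, ∀ v, f v ≠ 0 → v ∈ s}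

/-- The `n`-sphere. -/
abbrev Sph (n : ℕ) := Metric.sphere (0 : EuclideanSpace ℝ (Fin (n + 1))) 1

noncomputable def spherePt (n : ℕ) : Sph n :=
  ⟨EuclideanSpace.single 0 1, by
    simp [mem_sphere_zero_iff_norm, EuclideanSpace.norm_single]⟩

/-- The wedge of `k` copies of the `n`-sphere (a point if `k = 0`). -/
def Wedge (k n : ℕ) : Type :=
  Quot (fun p q : (Fin k × Sph n) ⊕ Unit =>
    (∃ i : Fin k, p = Sum.inl (i, spherePt n)) ∧ q = Sum.inr ())

noncomputable instance (k n : ℕ) : TopologicalSpace (Wedge k n) := by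
  unfold Wedge; infer_instance

/-- Unreduced suspension. -/
def Susp (X : Type*) [TopologicalSpace X] : Type _ :=
  Quot (fun p q : X × unitInterval => p.2 = q.2 ∧ (p.2 = 0 ∨ p.2 = 1))

instance (X : Type*) [TopologicalSpace X] : TopologicalSpace (Susp X) := by
  unfold Susp; infer_instance

/-- Iterated suspension, as an operation on bundled topological spaces. -/
noncomputable def iterSusp : ℕ → TopCat → TopCat
  | 0, X => X
  | (n + 1), X => TopCat.of (Susp (iterSusp n X))

end Spaces

section Graphs

/-- The `1`-dimensional complex spanned by a set of (edge) finsets. -/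
def graphASC {V : Type*} (E : Set (Finset V)) : ASC V where
  faces := {s | s.Nonempty ∧ ∃ e ∈ E, s ⊆ e}
  nonempty_of_mem h := h.1
  down_closed := by
    rintro s t ⟨_, e, he, hse⟩ hts htne
    exact ⟨htne, e, he, hts.trans hse⟩

/-- The path of length `u` on vertices `0, 1, …, u`. -/
def pathComplex (u : ℕ) : ASC (Fin (u + 1)) :=
  graphASC {e | ∃ i : Fin u, e = {i.castSucc, i.succ}}

/-- Vertex type for a path of length `t` with extended stars `S_{m,n}` and
`S_{k,l}` attached at the two endpoints. -/
abbrev WGV (t m n k l : ℕ) :=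
  Fin (t + 1) ⊕ (Fin m ⊕ Fin n × Fin 2) ⊕ (Fin k ⊕ Fin l × Fin 2)

/-- The graph `P_t ∨ S_{m,n} ∨ S_{k,l}`: the extended star `S_{m,n}` (a one-point
union of `m` paths of length 1 and `n` paths of length 2) has its center at the
endpoint `v₀` of the path, and `S_{k,l}` has its center at the endpoint `v_t`.
With `t = 0` (and `k = l = 0`) this is the extended star graph `S_{m,n}` itself. -/
def wedgeGraph (t m n k l : ℕ) : ASC (WGV t m n k l) :=
  graphASC {e |
    (∃ i : Fin t, e = {Sum.inl i.castSucc, Sum.inl i.succ}) ∨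
    (∃ j : Fin m, e = {Sum.inl 0, Sum.inr (Sum.inl (Sum.inl j))}) ∨
    (∃ i : Fin n, e = {Sum.inl 0, Sum.inr (Sum.inl (Sum.inr (i, 0)))}) ∨
    (∃ i : Fin n, e = {Sum.inr (Sum.inl (Sum.inr (i, 0))), Sum.inr (Sum.inl (Sum.inr (i, 1)))}) ∨
    (∃ j : Fin k, e = {Sum.inl (Fin.last t), Sum.inr (Sum.inr (Sum.inl j))}) ∨
    (∃ s : Fin l, e = {Sum.inl (Fin.last t), Sum.inr (Sum.inr (Sum.inr (s, 0)))}) ∨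
    (∃ s : Fin l, e = {Sum.inr (Sum.inr (Sum.inr (s, 0))), Sum.inr (Sum.inr (Sum.inr (s, 1)))})}

/-- `K ∨_v P_m`: attach a path of length `m` to the vertex `v` of `K` by one
endpoint. -/
def attachPath {V : Type*} [DecidableEq V] (K : ASC V) (v : V) (m : ℕ) : ASC (V ⊕ Fin m) where
  faces := (K.map Sum.inl).faces ∪
    {s | s.Nonempty ∧ ∃ e : Finset (V ⊕ Fin m),
      ((∃ i : Fin m, i.val = 0 ∧ e = {Sum.inl v, Sum.inr i}) ∨
       (∃ i j : Fin m, j.val = i.val + 1 ∧ e = {Sum.inr i, Sum.inr j})) ∧ s ⊆ e}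
  nonempty_of_mem := by
    rintro s (h | h)
    · exact (K.map Sum.inl).nonempty_of_mem h
    · exact h.1
  down_closed := by
    rintro s t (h | ⟨_, e, he, hse⟩) hts htne
    · exact Or.inl ((K.map Sum.inl).down_closed h hts htne)
    · exact Or.inr ⟨htne, e, he, hts.trans hse⟩

end Graphs

section Posets

/-- An alternating cycle `b₁ ≻ a₁ ≺ b₂ ≻ a₂ ≺ ⋯ ≺ b_p ≻ a_p ≺ b₁` for a set of
covering pairs in a poset. -/
def HasPosetCycle {P : Type*} [PartialOrder P] (S : Set (P × P)) : Prop :=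
  ∃ p : ℕ, 2 ≤ p ∧ ∃ a b : ℕ → P,
    (∀ i < p, (a i, b i) ∈ S) ∧
    (∀ i < p, a i ⋖ b ((i + 1) % p)) ∧
    (∀ i < p, ∀ j < p, a i = a j → i = j) ∧
    (∀ i < p, ∀ j < p, b i = b j → i = j)

theorem HasPosetCycle.mono {P : Type*} [PartialOrder P] {S T : Set (P × P)}
    (h : HasPosetCycle S) (hST : S ⊆ T) : HasPosetCycle T := by
  obtain ⟨p, hp, a, b, h1, h2, h3, h4⟩ := h
  exact ⟨p, hp, a, b, fun i hi => hST (h1 i hi), h2, h3, h4⟩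

/-- The complex `f(P)` of acyclic matchings on the Hasse diagram of a poset `P`:
vertices are covering pairs, faces are acyclic matchings. -/
def posetMatchingComplex (P : Type*) [PartialOrder P] : ASC (P × P) where
  faces := {s | s.Nonempty ∧ (∀ p ∈ s, p.1 ⋖ p.2) ∧
    (∀ p ∈ s, ∀ q ∈ s, p ≠ q → p.1 ≠ q.1 ∧ p.1 ≠ q.2 ∧ p.2 ≠ q.1 ∧ p.2 ≠ q.2) ∧
    ¬ HasPosetCycle (↑s : Set (P × P))}
  nonempty_of_mem h := h.1
  down_closed := by
    intro s t hs hts htne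
    refine ⟨htne, fun p hp => hs.2.1 p (hts hp),
      fun p hp q hq => hs.2.2.1 p (hts hp) q (hts hq), fun hc => hs.2.2.2 ?_⟩
    exact hc.mono (Finset.coe_subset.mpr hts)

end Posets
namespace MorseAux

variable {V W : Type*}

theorem image_preimage_of_subset [DecidableEq W] {i : V → W} (hi : Function.Injective i)
    {s : Finset W} {t : Finset V} (h : s ⊆ t.image i) :
    (s.preimage i hi.injOn).image i = s := by
  ext x
  simp only [Finset.mem_image, Finset.mem_preimage]
  constructor
  · rintro ⟨v, hv, rfl⟩; exact hv
  · intro hx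
    obtain ⟨v, _, rfl⟩ := Finset.mem_image.mp (h hx)
    exact ⟨v, hx, rfl⟩

theorem preimage_eq_of_image_eq [DecidableEq W] {i : V → W} (hi : Function.Injective i)
    {s : Finset W} {t : Finset V} (h : t.image i = s) :
    s.preimage i hi.injOn = t := by
  have h1 := image_preimage_of_subset hi (t := t) (s := s) (by rw [h])
  have h2 := Finset.image_injective (f := i) hi
  apply h2
  rw [h1, h]

theorem preimage_subset_preimage {i : V → W} (hi : Function.Injective i)
    {s t : Finset W} (h : s ⊆ t) :
    s.preimage i hi.injOn ⊆ t.preimage i hi.injOn := by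
  intro x hx
  simp only [Finset.mem_preimage] at *
  exact h hx

theorem preimage_congr {i : V → W} (hi : Function.Injective i) {s t : Finset W}
    (h : s = t) : s.preimage i hi.injOn = t.preimage i hi.injOn := by
  subst h; rfl

theorem ASC_ext {K L : ASC V} (h : K.faces = L.faces) : K = L := by
  cases K; cases L
  simp only at h
  subst h
  rfl

/-- Pushing a GVF forward along an injective vertex map. -/
theorem gvf_map [DecidableEq W] {i : V → W} (hi : Function.Injective i)
    {K : ASC V} {M : ASC W} (hface : ∀ s ∈ K.faces, s.image i ∈ M.faces)
    {S : Set (Finset V × Finset V)} (h : IsGVF K S) :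
    IsGVF M ((fun p : Finset V × Finset V => (p.1.image i, p.2.image i)) '' S) := by
  classical
  obtain ⟨⟨hm1, hm2⟩, hac⟩ := h
  refine ⟨⟨?_, ?_⟩, ?_⟩
  · rintro p ⟨q, hq, rfl⟩
    obtain ⟨h1, h2, h3, h4⟩ := hm1 q hq
    exact ⟨hface _ h1, hface _ h2, Finset.image_subset_image h3,
      by simp only [Finset.card_image_of_injective _ hi, h4]⟩
  · rintro p ⟨q, hq, rfl⟩ p' ⟨q', hq', rfl⟩ hne
    have hqq' : q ≠ q' := by rintro rfl; exact hne rfl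
    obtain ⟨d1, d2, d3, d4⟩ := hm2 q hq q' hq' hqq'
    have himg := Finset.image_injective (f := i) hi
    exact ⟨fun e => d1 (himg e), fun e => d2 (himg e), fun e => d3 (himg e),
      fun e => d4 (himg e)⟩
  · intro hc
    apply hac
    obtain ⟨k, α, β, hk, hstep, hcl⟩ := hc
    have hmem : ∀ j < k, ∃ q ∈ S, q.1.image i = α j ∧ q.2.image i = β j := by
      intro j hj
      obtain ⟨q, hq, he⟩ := (hstep j hj).1
      exact ⟨q, hq, congrArg Prod.fst he, congrArg Prod.snd he⟩
    have hαim : ∀ j ≤ k, ∃ a : Finset V, a.image i = α j := by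
      intro j hj
      rcases lt_or_eq_of_le hj with hj | hj
      · obtain ⟨q, _, hq1, _⟩ := hmem j hj
        exact ⟨q.1, hq1⟩
      · subst hj
        obtain ⟨q, _, hq1, _⟩ := hmem 0 hk
        exact ⟨q.1, by rw [hq1, hcl]⟩
    refine ⟨k, fun j => (α j).preimage i hi.injOn, fun j => (β j).preimage i hi.injOn, hk,
      ?_, preimage_congr hi hcl⟩
    intro j hj
    obtain ⟨q, hqS, hq1, hq2⟩ := hmem j hj
    obtain ⟨hj1, hj2, hj3, hj4⟩ := hstep j hj
    obtain ⟨c, hc1⟩ := hαim (j + 1) (by omega)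
    have e1 : (α j).preimage i hi.injOn = q.1 := preimage_eq_of_image_eq hi hq1
    have e2 : (β j).preimage i hi.injOn = q.2 := preimage_eq_of_image_eq hi hq2
    have e3 : (α (j + 1)).preimage i hi.injOn = c := preimage_eq_of_image_eq hi hc1
    refine ⟨by dsimp only; rw [e1, e2]; exact hqS, preimage_subset_preimage hi hj2, ?_, ?_⟩
    · dsimp only
      rw [e2, e3]
      have hcq : q.2.card = (q.2.image i).card := (Finset.card_image_of_injective _ hi).symm
      rw [hcq, hq2, hj3, ← hc1, Finset.card_image_of_injective _ hi]
    · dsimp only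
      rw [e1, e3]
      intro hce
      apply hj4
      rw [← hc1, ← hq1, hce]

/-- Pulling a GVF back along an injective vertex map, when all simplices
involved are images of faces of `K`. -/
theorem gvf_comap [DecidableEq W] {i : V → W} (hi : Function.Injective i)
    {K : ASC V} {M : ASC W} {S : Set (Finset W × Finset W)} (hM : IsGVF M S)
    (hset : ∀ p ∈ S, (∃ a ∈ K.faces, p.1 = a.image i) ∧ (∃ b ∈ K.faces, p.2 = b.image i)) :
    IsGVF K ((fun p : Finset W × Finset W =>
      (p.1.preimage i hi.injOn, p.2.preimage i hi.injOn)) '' S) := by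
  classical
  obtain ⟨⟨hm1, hm2⟩, hac⟩ := hM
  refine ⟨⟨?_, ?_⟩, ?_⟩
  · rintro p ⟨q, hq, rfl⟩
    obtain ⟨⟨a, ha, hqa⟩, ⟨b, hb, hqb⟩⟩ := hset q hq
    obtain ⟨h1, h2, h3, h4⟩ := hm1 q hq
    have e1 : q.1.preimage i hi.injOn = a := preimage_eq_of_image_eq hi hqa.symm
    have e2 : q.2.preimage i hi.injOn = b := preimage_eq_of_image_eq hi hqb.symm
    refine ⟨by dsimp only; rw [e1]; exact ha, by dsimp only; rw [e2]; exact hb,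
      preimage_subset_preimage hi h3, ?_⟩
    dsimp only
    rw [e1, e2]
    have h4' := h4
    rw [hqa, hqb, Finset.card_image_of_injective _ hi, Finset.card_image_of_injective _ hi] at h4'
    exact h4'
  · rintro p ⟨q, hq, rfl⟩ p' ⟨q', hq', rfl⟩ hne
    have hqq' : q ≠ q' := by rintro rfl; exact hne rfl
    obtain ⟨⟨a, ha, hqa⟩, ⟨b, hb, hqb⟩⟩ := hset q hq
    obtain ⟨⟨a', ha', hqa'⟩, ⟨b', hb', hqb'⟩⟩ := hset q' hq'
    obtain ⟨d1, d2, d3, d4⟩ := hm2 q hq q' hq' hqq'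
    have e1 : q.1.preimage i hi.injOn = a := preimage_eq_of_image_eq hi hqa.symm
    have e2 : q.2.preimage i hi.injOn = b := preimage_eq_of_image_eq hi hqb.symm
    have e1' : q'.1.preimage i hi.injOn = a' := preimage_eq_of_image_eq hi hqa'.symm
    have e2' : q'.2.preimage i hi.injOn = b' := preimage_eq_of_image_eq hi hqb'.symm
    refine ⟨?_, ?_, ?_, ?_⟩
    · dsimp only; rw [e1, e1']; intro hee; exact d1 (by rw [hqa, hqa', hee])
    · dsimp only; rw [e1, e2']; intro hee; exact d2 (by rw [hqa, hqb', hee])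
    · dsimp only; rw [e2, e1']; intro hee; exact d3 (by rw [hqb, hqa', hee])
    · dsimp only; rw [e2, e2']; intro hee; exact d4 (by rw [hqb, hqb', hee])
  · intro hc
    apply hac
    obtain ⟨k, a, b, hk, hstep, hcl⟩ := hc
    refine ⟨k, fun j => (a j).image i, fun j => (b j).image i, hk, ?_, by dsimp only; rw [hcl]⟩
    intro j hj
    obtain ⟨h1, h2, h3, h4⟩ := hstep j hj
    obtain ⟨q, hq, he⟩ := h1
    obtain ⟨⟨A, hA, hqa⟩, ⟨B, hB, hqb⟩⟩ := hset q hq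
    have eA : q.1.preimage i hi.injOn = A := preimage_eq_of_image_eq hi hqa.symm
    have eB : q.2.preimage i hi.injOn = B := preimage_eq_of_image_eq hi hqb.symm
    have haj : a j = A := (congrArg Prod.fst he).symm.trans eA
    have hbj : b j = B := (congrArg Prod.snd he).symm.trans eB
    refine ⟨?_, Finset.image_subset_image h2, ?_, ?_⟩
    · have heq : ((a j).image i, (b j).image i) = q := by
        rw [haj, hbj, ← hqa, ← hqb]
      rw [heq]; exact hq
    · simp only [Finset.card_image_of_injective _ hi, h3]
    · intro hee
      exact h4 (Finset.image_injective (f := i) hi hee)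

/-- A closed V-path in a union of two "separated" vector fields lies in one part. -/
theorem closedPath_union {X : Type*} {S T : Set (Finset X × Finset X)} (P : X → Prop)
    (hS : ∀ p ∈ S, ∀ x ∈ p.2, P x) (hT : ∀ p ∈ T, ∀ x ∈ p.2, ¬ P x)
    (hne : ∀ p ∈ S ∪ T, p.1.Nonempty ∧ p.1 ⊆ p.2)
    (h : hasClosedPath (S ∪ T)) : hasClosedPath S ∨ hasClosedPath T := by
  obtain ⟨k, α, β, hk, hstep, hcl⟩ := h
  have hmem : ∀ j < k, (α j, β j) ∈ S ∪ T := fun j hj => (hstep j hj).1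
  rcases hmem 0 hk with h0 | h0
  · left
    have key : ∀ j, j < k → (α j, β j) ∈ S := by
      intro j
      induction j with
      | zero => intro _; exact h0
      | succ n ih =>
        intro hj
        have hn : n < k := by omega
        have hprev := ih hn
        rcases hmem (n + 1) hj with hh | hh
        · exact hh
        · exfalso
          have hne1 := (hne _ (Or.inr hh)).1
          obtain ⟨x, hx⟩ := hne1
          have hxP : P x := hS _ hprev x ((hstep n hn).2.1 hx)
          exact hT _ hh x ((hne _ (Or.inr hh)).2 hx) hxP
    exact ⟨k, α, β, hk, fun j hj => ⟨key j hj, (hstep j hj).2.1, (hstep j hj).2.2.1,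
      (hstep j hj).2.2.2⟩, hcl⟩
  · right
    have key : ∀ j, j < k → (α j, β j) ∈ T := by
      intro j
      induction j with
      | zero => intro _; exact h0
      | succ n ih =>
        intro hj
        have hn : n < k := by omega
        have hprev := ih hn
        rcases hmem (n + 1) hj with hh | hh
        · exfalso
          have hne1 := (hne _ (Or.inl hh)).1
          obtain ⟨x, hx⟩ := hne1
          have hxP : ¬ P x := hT _ hprev x ((hstep n hn).2.1 hx)
          exact hxP (hS _ hh x ((hne _ (Or.inl hh)).2 hx))
        · exact hh
    exact ⟨k, α, β, hk, fun j hj => ⟨key j hj, (hstep j hj).2.1, (hstep j hj).2.2.1,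
      (hstep j hj).2.2.2⟩, hcl⟩

end MorseAux
namespace MorseAux

theorem gvf_union {V W : Type*} [DecidableEq V] [DecidableEq W] {K : ASC V} {L : ASC W}
    {S T : Set (Finset (V ⊕ W) × Finset (V ⊕ W))}
    (hS : IsGVF (K.disjUnion L) S) (hT : IsGVF (K.disjUnion L) T)
    (hSl : ∀ p ∈ S, ∀ x ∈ p.2, ∃ v, x = Sum.inl v)
    (hTr : ∀ p ∈ T, ∀ x ∈ p.2, ∃ w, x = Sum.inr w) :
    IsGVF (K.disjUnion L) (S ∪ T) := by
  have hne : ∀ p ∈ S ∪ T, p.1.Nonempty ∧ p.1 ⊆ p.2 := by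
    rintro p (hp | hp)
    · exact ⟨(K.disjUnion L).nonempty_of_mem (hS.1.1 p hp).1, (hS.1.1 p hp).2.2.1⟩
    · exact ⟨(K.disjUnion L).nonempty_of_mem (hT.1.1 p hp).1, (hT.1.1 p hp).2.2.1⟩
  have hcross : ∀ p ∈ S, ∀ q ∈ T, p.1 ≠ q.1 ∧ p.1 ≠ q.2 ∧ p.2 ≠ q.1 ∧ p.2 ≠ q.2 := by
    intro p hp q hq
    obtain ⟨hpne, hp12⟩ := hne p (Or.inl hp)
    obtain ⟨hqne, hq12⟩ := hne q (Or.inr hq)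
    obtain ⟨x, hx⟩ := hpne
    obtain ⟨v, rfl⟩ := hSl p hp x (hp12 hx)
    have hall2 : ∀ x ∈ q.2, ∃ w', x = Sum.inr w' := hTr q hq
    have hp1 : Sum.inl v ∈ p.1 := hx
    have hp2 : Sum.inl v ∈ p.2 := hp12 hx
    refine ⟨?_, ?_, ?_, ?_⟩
    · intro he
      obtain ⟨w', hw'⟩ := hall2 (Sum.inl v) (hq12 (he ▸ hp1))
      exact Sum.inl_ne_inr hw'
    · intro he
      obtain ⟨w', hw'⟩ := hall2 (Sum.inl v) (he ▸ hp1)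
      exact Sum.inl_ne_inr hw'
    · intro he
      obtain ⟨w', hw'⟩ := hall2 (Sum.inl v) (hq12 (he ▸ hp2))
      exact Sum.inl_ne_inr hw'
    · intro he
      obtain ⟨w', hw'⟩ := hall2 (Sum.inl v) (he ▸ hp2)
      exact Sum.inl_ne_inr hw'
  refine ⟨⟨?_, ?_⟩, ?_⟩
  · rintro p (hp | hp)
    · exact hS.1.1 p hp
    · exact hT.1.1 p hp
  · rintro p (hp | hp) q (hq | hq) hpq
    · exact hS.1.2 p hp q hq hpq
    · exact hcross p hp q hq
    · obtain ⟨d1, d2, d3, d4⟩ := hcross q hq p hp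
      exact ⟨d1.symm, d3.symm, d2.symm, d4.symm⟩
    · exact hT.1.2 p hp q hq hpq
  · intro hc
    have hTside : ∀ p ∈ T, ∀ x ∈ p.2, ¬ ∃ v, x = Sum.inl v := by
      rintro p hp x hx ⟨v, hv⟩
      obtain ⟨w, rfl⟩ := hTr p hp x hx
      exact Sum.inr_ne_inl hv
    rcases closedPath_union (fun x => ∃ v, x = Sum.inl v) hSl hTside hne hc with h | h
    · exact hS.2 h
    · exact hT.2 h

end MorseAux

/-- The Morse complex of a disjoint union of two connected simplicial
complexes, each containing at least one edge, equals the join of their Morse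
complexes: `M(K ⊔ L) = M(K) * M(L)`. -/
theorem morseComplex_disjUnion_eq_join {V W : Type*} [DecidableEq V] [DecidableEq W]
    (K : ASC V) (L : ASC W)
    (hKc : K.Connected) (hLc : L.Connected)
    (hKe : ∃ s ∈ K.faces, s.card = 2) (hLe : ∃ s ∈ L.faces, s.card = 2) :
    MorseComplex (K.disjUnion L) =
      ASC.join
        ((MorseComplex K).map (fun p => (p.1.image Sum.inl, p.2.image Sum.inl)))
        ((MorseComplex L).map (fun p => (p.1.image Sum.inr, p.2.image Sum.inr))) := by
  classical
  have hinl : Function.Injective (Sum.inl : V → V ⊕ W) := Sum.inl_injective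
  have hinr : Function.Injective (Sum.inr : W → V ⊕ W) := Sum.inr_injective
  have hfaceK : ∀ c ∈ K.faces, c.image Sum.inl ∈ (K.disjUnion L).faces :=
    fun c hc => Or.inl ⟨c, hc, rfl⟩
  have hfaceL : ∀ c ∈ L.faces, c.image Sum.inr ∈ (K.disjUnion L).faces :=
    fun c hc => Or.inr ⟨c, hc, rfl⟩
  have hcases : ∀ u ∈ (K.disjUnion L).faces,
      (∃ a ∈ K.faces, u = a.image Sum.inl) ∨ (∃ b ∈ L.faces, u = b.image Sum.inr) := by
    rintro u (h | h)
    · obtain ⟨a, ha, rfl⟩ := h; exact Or.inl ⟨a, ha, rfl⟩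
    · obtain ⟨b, hb, rfl⟩ := h; exact Or.inr ⟨b, hb, rfl⟩
  have hleft : ∀ u ∈ (K.disjUnion L).faces, (∀ x ∈ u, ∃ v, x = Sum.inl v) →
      ∃ a ∈ K.faces, u = a.image Sum.inl := by
    intro u hu hall
    rcases hcases u hu with h | ⟨b, hb, rfl⟩
    · exact h
    · exfalso
      obtain ⟨w, hw⟩ := L.nonempty_of_mem hb
      obtain ⟨v, hv⟩ := hall (Sum.inr w) (Finset.mem_image_of_mem _ hw)
      exact Sum.inr_ne_inl hv
  apply MorseAux.ASC_ext
  apply Set.ext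
  intro s
  constructor
  · rintro ⟨hsne, hgvf⟩
    set sK := s.filter (fun p => ∀ x ∈ p.2, ∃ v, x = Sum.inl v) with hsKdef
    set sL := s.filter (fun p => ¬ ∀ x ∈ p.2, ∃ v, x = Sum.inl v) with hsLdef
    have hsplit : sK ∪ sL = s := Finset.filter_union_filter_not_eq _ s
    have hfaces : ∀ p ∈ s, p.1 ∈ (K.disjUnion L).faces ∧ p.2 ∈ (K.disjUnion L).faces ∧
        p.1 ⊆ p.2 :=
      fun p hp => ⟨(hgvf.1.1 p hp).1, (hgvf.1.1 p hp).2.1, (hgvf.1.1 p hp).2.2.1⟩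
    have hKside : ∀ p ∈ sK, (∃ a ∈ K.faces, p.1 = a.image Sum.inl) ∧
        (∃ b ∈ K.faces, p.2 = b.image Sum.inl) := by
      intro p hp
      have hps : p ∈ s := (Finset.mem_filter.mp hp).1
      have hall : ∀ x ∈ p.2, ∃ v, x = Sum.inl v := (Finset.mem_filter.mp hp).2
      obtain ⟨h1, h2, h12⟩ := hfaces p hps
      exact ⟨hleft p.1 h1 (fun x hx => hall x (h12 hx)), hleft p.2 h2 hall⟩
    have hLside : ∀ p ∈ sL, (∃ a ∈ L.faces, p.1 = a.image Sum.inr) ∧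
        (∃ b ∈ L.faces, p.2 = b.image Sum.inr) := by
      intro p hp
      have hps : p ∈ s := (Finset.mem_filter.mp hp).1
      have hnall : ¬ ∀ x ∈ p.2, ∃ v, x = Sum.inl v := (Finset.mem_filter.mp hp).2
      obtain ⟨h1, h2, h12⟩ := hfaces p hps
      have h2r : ∃ b ∈ L.faces, p.2 = b.image Sum.inr := by
        rcases hcases p.2 h2 with ⟨a, ha, he⟩ | h
        · exfalso
          apply hnall
          intro x hx
          rw [he] at hx
          obtain ⟨v, _, rfl⟩ := Finset.mem_image.mp hx
          exact ⟨v, rfl⟩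
        · exact h
      obtain ⟨b, hb, he⟩ := h2r
      refine ⟨?_, b, hb, he⟩
      rcases hcases p.1 h1 with ⟨a, ha, he1⟩ | h
      · exfalso
        obtain ⟨v, hv⟩ := K.nonempty_of_mem ha
        have hmem2 : Sum.inl v ∈ p.2 := h12 (by rw [he1]; exact Finset.mem_image_of_mem _ hv)
        rw [he] at hmem2
        obtain ⟨w, _, hw⟩ := Finset.mem_image.mp hmem2
        exact Sum.inr_ne_inl hw
      · exact h
    set pbK : Finset (V ⊕ W) × Finset (V ⊕ W) → Finset V × Finset V :=
      fun p => (p.1.preimage Sum.inl hinl.injOn, p.2.preimage Sum.inl hinl.injOn) with hpbK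
    set pbL : Finset (V ⊕ W) × Finset (V ⊕ W) → Finset W × Finset W :=
      fun p => (p.1.preimage Sum.inr hinr.injOn, p.2.preimage Sum.inr hinr.injOn) with hpbL
    set tK := sK.image pbK with htKdef
    set tL := sL.image pbL with htLdef
    have htK : tK.image
        (fun p : Finset V × Finset V => (p.1.image Sum.inl, p.2.image Sum.inl)) = sK := by
      rw [htKdef, Finset.image_image]
      have heq : ∀ p ∈ sK,
          ((fun p : Finset V × Finset V => (p.1.image Sum.inl, p.2.image Sum.inl)) ∘ pbK) p
            = p := by
        intro p hp
        obtain ⟨⟨a, ha, e1⟩, ⟨b, hb, e2⟩⟩ := hKside p hp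
        have p1 : p.1.preimage Sum.inl hinl.injOn = a :=
          MorseAux.preimage_eq_of_image_eq hinl e1.symm
        have p2 : p.2.preimage Sum.inl hinl.injOn = b :=
          MorseAux.preimage_eq_of_image_eq hinl e2.symm
        simp only [Function.comp, hpbK]
        rw [p1, p2, ← e1, ← e2]
      rw [Finset.image_congr heq, Finset.image_id']
    have htL : tL.image
        (fun p : Finset W × Finset W => (p.1.image Sum.inr, p.2.image Sum.inr)) = sL := by
      rw [htLdef, Finset.image_image]
      have heq : ∀ p ∈ sL,
          ((fun p : Finset W × Finset W => (p.1.image Sum.inr, p.2.image Sum.inr)) ∘ pbL) p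
            = p := by
        intro p hp
        obtain ⟨⟨a, ha, e1⟩, ⟨b, hb, e2⟩⟩ := hLside p hp
        have p1 : p.1.preimage Sum.inr hinr.injOn = a :=
          MorseAux.preimage_eq_of_image_eq hinr e1.symm
        have p2 : p.2.preimage Sum.inr hinr.injOn = b :=
          MorseAux.preimage_eq_of_image_eq hinr e2.symm
        simp only [Function.comp, hpbL]
        rw [p1, p2, ← e1, ← e2]
      rw [Finset.image_congr heq, Finset.image_id']
    have hgvfK : sK.Nonempty → tK ∈ (MorseComplex K).faces := by
      intro hn
      refine ⟨hn.image _, ?_⟩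
      have hsub : (↑sK : Set (Finset (V ⊕ W) × Finset (V ⊕ W))) ⊆ ↑s :=
        Finset.coe_subset.mpr (Finset.filter_subset _ _)
      have hM : IsGVF (K.disjUnion L) (↑sK : Set (Finset (V ⊕ W) × Finset (V ⊕ W))) :=
        hgvf.mono hsub
      have hres := MorseAux.gvf_comap hinl hM (fun p hp => hKside p hp)
      rw [htKdef, Finset.coe_image]
      exact hres
    have hgvfL : sL.Nonempty → tL ∈ (MorseComplex L).faces := by
      intro hn
      refine ⟨hn.image _, ?_⟩
      have hsub : (↑sL : Set (Finset (V ⊕ W) × Finset (V ⊕ W))) ⊆ ↑s :=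
        Finset.coe_subset.mpr (Finset.filter_subset _ _)
      have hM : IsGVF (K.disjUnion L) (↑sL : Set (Finset (V ⊕ W) × Finset (V ⊕ W))) :=
        hgvf.mono hsub
      have hres := MorseAux.gvf_comap hinr hM (fun p hp => hLside p hp)
      rw [htLdef, Finset.coe_image]
      exact hres
    by_cases hLne : sL.Nonempty
    · by_cases hKne : sK.Nonempty
      · refine Or.inr ⟨_, ⟨tK, hgvfK hKne, rfl⟩, _, ⟨tL, hgvfL hLne, rfl⟩, ?_⟩
        rw [htK, htL, hsplit]
      · have hseq : s = sL := by
          rw [← hsplit, Finset.not_nonempty_iff_eq_empty.mp hKne, Finset.empty_union]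
        exact Or.inl (Or.inr ⟨tL, hgvfL hLne, by rw [htL, ← hseq]⟩)
    · have hseq : s = sK := by
        rw [← hsplit, Finset.not_nonempty_iff_eq_empty.mp hLne, Finset.union_empty]
      have hKne : sK.Nonempty := by rw [← hseq]; exact hsne
      exact Or.inl (Or.inl ⟨tK, hgvfK hKne, by rw [htK, ← hseq]⟩)
  · rintro ((h | h) | ⟨a, ⟨t1, ht1, rfl⟩, b, ⟨t2, ht2, rfl⟩, rfl⟩)
    · obtain ⟨t, ⟨htne, htgvf⟩, rfl⟩ := h
      refine ⟨htne.image _, ?_⟩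
      rw [Finset.coe_image]
      exact MorseAux.gvf_map hinl hfaceK htgvf
    · obtain ⟨t, ⟨htne, htgvf⟩, rfl⟩ := h
      refine ⟨htne.image _, ?_⟩
      rw [Finset.coe_image]
      exact MorseAux.gvf_map hinr hfaceL htgvf
    · refine ⟨?_, ?_⟩
      · obtain ⟨x, hx⟩ := ht1.1
        exact ⟨_, Finset.mem_union_left _ (Finset.mem_image_of_mem _ hx)⟩
      · rw [Finset.coe_union, Finset.coe_image, Finset.coe_image]
        have hgK := MorseAux.gvf_map hinl hfaceK ht1.2
        have hgL := MorseAux.gvf_map hinr hfaceL ht2.2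
        refine MorseAux.gvf_union hgK hgL ?_ ?_
        · rintro p ⟨q, hq, rfl⟩ x hx
          obtain ⟨v, _, rfl⟩ := Finset.mem_image.mp hx
          exact ⟨v, rfl⟩
        · rintro p ⟨q, hq, rfl⟩ x hx
          obtain ⟨w, _, rfl⟩ := Finset.mem_image.mp hx
          exact ⟨w, rfl⟩
end

section
/- Let K be a simplicial complex with a leaf {a, ab} (i.e., vertex a has degree 1 with unique neighbor b), and let c be a neighbor of b with c ≠ a. Then in the Morse complex M(K), the vertex corresponding to the primitive gradient vector field (b, bc) is dominated by the vertex corresponding to (a, ab); that is, every facet of M(K) containing (b, bc) also contains (a, ab). -/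
/-- If `{a, ab}` is a leaf of a graph `K` and `c ≠ a` is a neighbor of
`b`, then the vertex `(b, bc)` of the Morse complex is dominated by `(a, ab)`:
every facet of `M(K)` containing `(b, bc)` also contains `(a, ab)`. -/
theorem morse_leaf_dominates {V : Type*} [DecidableEq V] (K : ASC V) (a b c : V)
    (hdim : ∀ s ∈ K.faces, s.card ≤ 2)
    (hab : ({a, b} : Finset V) ∈ K.faces) (hbc : ({b, c} : Finset V) ∈ K.faces)
    (hba : a ≠ b) (hca : c ≠ a) (hcb : c ≠ b)
    (hleaf : ∀ w : V, w ≠ a → ({a, w} : Finset V) ∈ K.faces → w = b) :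
    (MorseComplex K).Dominates
      (({a} : Finset V), ({a, b} : Finset V))
      (({b} : Finset V), ({b, c} : Finset V)) := by
  classical
  have hone : ({a} : Finset V) ∈ K.faces :=
    K.down_closed hab (by simp) ⟨a, by simp⟩
  have hcab : ({a, b} : Finset V).card = 2 := Finset.card_pair hba
  have hpair : ∀ s ∈ K.faces, s.card = 2 → a ∈ s → s = ({a, b} : Finset V) := by
    intro s hsK hs has
    obtain ⟨x, y, hxy, rfl⟩ := Finset.card_eq_two.mp hs
    rcases Finset.mem_insert.mp has with rfl | h
    · have hy : y = b := hleaf y (fun h => hxy h.symm) hsK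
      rw [hy]
    · rw [Finset.mem_singleton] at h
      subst h
      rw [Finset.pair_comm x a] at hsK ⊢
      have hx : x = b := hleaf x (fun h => hxy h) hsK
      rw [hx]
  constructor
  · intro h
    have h1 : ({a} : Finset V) = {b} := congrArg Prod.fst h
    exact hba (Finset.mem_singleton.mp (h1 ▸ Finset.mem_singleton_self a))
  · rintro F ⟨hFface, hFmax⟩ hp'F
    by_contra hpF
    obtain ⟨hFne, hFgvf⟩ := hFface
    have hmem : ∀ q ∈ F, q.1 ∈ K.faces ∧ q.2 ∈ K.faces ∧ q.1 ⊆ q.2 ∧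
        q.2.card = q.1.card + 1 := fun q hq => hFgvf.1.1 q (Finset.mem_coe.mpr hq)
    -- no element of F has second component {a, b}
    have hq2ab : ∀ q ∈ F, q.2 ≠ ({a, b} : Finset V) := by
      intro q hq heq
      have hm := hmem q hq
      have hc1 : q.1.card = 1 := by
        have h1 := hm.2.2.2
        rw [heq, hcab] at h1
        omega
      obtain ⟨x, hx1⟩ := Finset.card_eq_one.mp hc1
      have hx : x ∈ ({a, b} : Finset V) := by
        have := hm.2.2.1 (hx1 ▸ Finset.mem_singleton_self x)
        rwa [heq] at this
      rcases Finset.mem_insert.mp hx with hxa | hxb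
      · have hqp : q = ((({a} : Finset V)), ({a, b} : Finset V)) :=
          Prod.ext (by rw [hx1, hxa]) heq
        exact hpF (hqp ▸ hq)
      · have hxb' := Finset.mem_singleton.mp hxb
        have hqne : q ≠ ((({b} : Finset V)), ({b, c} : Finset V)) := by
          intro h
          have h2 : q.2 = ({b, c} : Finset V) := congrArg Prod.snd h
          rw [heq] at h2
          have : a ∈ ({b, c} : Finset V) := h2 ▸ Finset.mem_insert_self a {b}
          rcases Finset.mem_insert.mp this with h3 | h3
          · exact hba h3
          · exact hca (Finset.mem_singleton.mp h3).symm
        have := (hFgvf.1.2 q (Finset.mem_coe.mpr hq) _ (Finset.mem_coe.mpr hp'F) hqne).1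
        exact this (by rw [hx1, hxb'])
    -- no element of F touches the vertex a at all
    have hA : ∀ q ∈ F, a ∉ q.2 := by
      intro q hq haq
      have hm := hmem q hq
      have hc2 : q.2.card = 2 := by
        have h1 : 0 < q.1.card := Finset.card_pos.mpr (K.nonempty_of_mem hm.1)
        have h2 := hdim q.2 hm.2.1
        have h3 := hm.2.2.2
        omega
      exact hq2ab q hq (hpair q.2 hm.2.1 hc2 haq)
    have hano : ∀ q ∈ F, a ∉ q.1 ∧ a ∉ q.2 :=
      fun q hq => ⟨fun h => hA q hq ((hmem q hq).2.2.1 h), hA q hq⟩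
    set p : Finset V × Finset V := (({a} : Finset V), ({a, b} : Finset V)) with hp
    have hinsert : insert p F ∈ (MorseComplex K).faces := by
      refine ⟨Finset.insert_nonempty _ _, ⟨?_, ?_⟩, ?_⟩
      · -- pairs are codimension-one faces
        intro q hq
        rw [Finset.coe_insert, Set.mem_insert_iff] at hq
        rcases hq with rfl | hq
        · exact ⟨hone, hab, by simp [hp], by rw [hcab]; simp [hp]⟩
        · exact hmem q (Finset.mem_coe.mp hq)
      · -- matching condition
        intro q hq r hr hqr
        rw [Finset.coe_insert, Set.mem_insert_iff] at hq hr
        rcases hq with rfl | hq <;> rcases hr with rfl | hr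
        · exact absurd rfl hqr
        · have hr' := Finset.mem_coe.mp hr
          refine ⟨?_, ?_, ?_, ?_⟩
          · intro h; exact (hano r hr').1 (h ▸ Finset.mem_singleton_self a)
          · intro h; exact (hano r hr').2 (h ▸ Finset.mem_singleton_self a)
          · intro h; exact (hano r hr').1 (h ▸ Finset.mem_insert_self a {b})
          · intro h; exact (hano r hr').2 (h ▸ Finset.mem_insert_self a {b})
        · have hq' := Finset.mem_coe.mp hq
          refine ⟨?_, ?_, ?_, ?_⟩
          · intro h; exact (hano q hq').1 (h ▸ Finset.mem_singleton_self a)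
          · intro h; exact (hano q hq').1 (h ▸ Finset.mem_insert_self a {b})
          · intro h; exact (hano q hq').2 (h ▸ Finset.mem_singleton_self a)
          · intro h; exact (hano q hq').2 (h ▸ Finset.mem_insert_self a {b})
        · exact hFgvf.1.2 q hq r hr hqr
      · -- acyclicity
        rintro ⟨k, α, β, hk, hstep, hcl⟩
        by_cases hall : ∀ i < k, (α i, β i) ∈ F
        · exact hFgvf.2 ⟨k, α, β, hk, fun i hi =>
            ⟨Finset.mem_coe.mpr (hall i hi), (hstep i hi).2.1,
              (hstep i hi).2.2.1, (hstep i hi).2.2.2⟩, hcl⟩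
        · push_neg at hall
          obtain ⟨i, hik, hiF⟩ := hall
          have hip : (α i, β i) = p := by
            have h1 := (hstep i hik).1
            rw [Finset.coe_insert, Set.mem_insert_iff] at h1
            rcases h1 with h | h
            · exact h
            · exact absurd (Finset.mem_coe.mp h) hiF
          have hαi : α i = ({a} : Finset V) := congrArg Prod.fst hip
          obtain ⟨j, hjk, hj1⟩ : ∃ j < k, α (j + 1) = ({a} : Finset V) := by
            rcases Nat.eq_zero_or_pos i with rfl | hi0
            · exact ⟨k - 1, by omega, by rw [Nat.sub_add_cancel hk, hcl]; exact hαi⟩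
            · exact ⟨i - 1, by omega, by rw [Nat.sub_add_cancel hi0]; exact hαi⟩
          have hjmem := (hstep j hjk).1
          rw [Finset.coe_insert, Set.mem_insert_iff] at hjmem
          rcases hjmem with h | h
          · have hαj : α j = ({a} : Finset V) := congrArg Prod.fst h
            exact (hstep j hjk).2.2.2 (hj1.trans hαj.symm)
          · exact hA _ (Finset.mem_coe.mp h)
              ((hstep j hjk).2.1 (hj1 ▸ Finset.mem_singleton_self a))
    have heq := hFmax (insert p F) hinsert (Finset.subset_insert p F)
    rw [heq] at hpF
    exact hpF (Finset.mem_insert_self p F)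
end

section
/- The Morse complex M(K) of a finite connected simplicial complex K is a flag complex if and only if K is a tree. -/
/-!
On a `1`-dimensional complex a V-path runs through vertices and edges, i.e. it is a walk, and
the matching condition forbids it to turn back along the edge it just used; a closed such walk
contains a cycle. So on a tree every set of pairwise compatible primitive vector fields is a
gradient vector field. Conversely, along a cycle `c₀, …, c_{k-1}` with `k ≥ 3` the primitive
vector fields `({cᵢ}, {cᵢ, cᵢ₊₁})` are pairwise compatible but together form a closed V-path,
and a simplex of dimension `≥ 2` contains a triangle; so if `M(K)` is flag, the connected
complex `K` is a `1`-dimensional complex without cycles.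
-/

namespace ASC

variable {V : Type*} [DecidableEq V]

def HasCycle (K : ASC V) : Prop :=
  ∃ (k : ℕ) (c : ℕ → V), 3 ≤ k ∧ (∀ i < k, ∀ j < k, c i = c j → i = j) ∧
    (∀ i < k, ({c i, c (i + 1)} : Finset V) ∈ K.faces) ∧ c k = c 0

theorem hasCycle_of_triangle (K : ASC V) {a b d : V} (hab : a ≠ b) (had : a ≠ d) (hbd : b ≠ d)
    (h₁ : ({a, b} : Finset V) ∈ K.faces) (h₂ : ({b, d} : Finset V) ∈ K.faces)
    (h₃ : ({d, a} : Finset V) ∈ K.faces) : K.HasCycle := by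
  refine ⟨3, fun i => [a, b, d, a].getD i a, le_rfl, ?_, ?_, rfl⟩
  · intro i hi j hj h
    interval_cases i <;> interval_cases j <;> simp_all [eq_comm]
  · intro i hi
    interval_cases i <;> assumption

theorem card_le_two_of_not_hasCycle {K : ASC V} (hK : ¬ K.HasCycle) {s : Finset V}
    (hs : s ∈ K.faces) : s.card ≤ 2 := by
  by_contra! h3
  obtain ⟨t, hts, ht⟩ := Finset.exists_subset_card_eq h3
  obtain ⟨a, b, d, hab, had, hbd, rfl⟩ := Finset.card_eq_three.mp ht
  have hedge : ∀ x ∈ s, ∀ y ∈ s, ({x, y} : Finset V) ∈ K.faces := fun x hx y hy =>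
    K.down_closed hs (Finset.insert_subset hx (Finset.singleton_subset_iff.mpr hy))
      (Finset.insert_nonempty _ _)
  have ha : a ∈ s := hts (by simp)
  have hb : b ∈ s := hts (by simp)
  have hd : d ∈ s := hts (by simp)
  exact hK <| K.hasCycle_of_triangle hab had hbd (hedge a ha b hb) (hedge b hb d hd)
    (hedge d hd a ha)

/-- The cycle is a shortest closed subwalk. -/
theorem hasCycle_of_closedWalk (K : ASC V) {c : ℕ → V} {m : ℕ} (hm : 0 < m) (hcl : c m = c 0)
    (hstep : ∀ i < m, c (i + 1) ≠ c i) (hback : ∀ i, i + 2 ≤ m → c (i + 2) ≠ c i)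
    (hedge : ∀ i < m, ({c i, c (i + 1)} : Finset V) ∈ K.faces) : K.HasCycle := by
  classical
  have hex : ∃ d, 0 < d ∧ ∃ i, i + d ≤ m ∧ c (i + d) = c i := ⟨m, hm, 0, by simpa using hcl⟩
  obtain ⟨hd0, i, hidm, hi⟩ := Nat.find_spec hex
  have hmin : ∀ a b, a < b → b < Nat.find hex → c (i + a) ≠ c (i + b) := fun a b hab hb h =>
    Nat.find_min hex (show b - a < Nat.find hex by omega)
      ⟨by omega, i + a, by omega, by rw [show i + a + (b - a) = i + b by omega, h]⟩
  have hd3 : 3 ≤ Nat.find hex := by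
    by_contra! h
    interval_cases hd : Nat.find hex
    · exact hstep i hidm hi
    · exact hback i hidm hi
  refine ⟨Nat.find hex, fun j => c (i + j), hd3, ?_, fun j hj => hedge (i + j) (by omega), hi⟩
  intro a ha b hb h
  rcases Nat.lt_trichotomy a b with hab | hab | hab
  exacts [absurd h (hmin a b hab hb), hab, absurd h.symm (hmin b a hab ha)]

end ASC

section CycleIndex

variable {α : Type*} {k : ℕ} {c : ℕ → α} (hinj : ∀ i < k, ∀ j < k, c i = c j → i = j)
  (hclose : c k = c 0)
include hinj hclose

theorem cycle_index_eq_of_eq_succ {i j : ℕ} (hi : i < k) (hj : j < k) (h : c i = c (j + 1)) :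
    i = j + 1 ∨ (j + 1 = k ∧ i = 0) := by
  rcases Nat.lt_or_ge (j + 1) k with hj' | hj'
  · exact .inl (hinj i hi _ hj' h)
  · obtain rfl : j + 1 = k := by omega
    exact .inr ⟨rfl, hinj i hi 0 (by omega) (h.trans hclose)⟩

theorem cycle_succ_ne (hk : 2 ≤ k) {i : ℕ} (hi : i < k) : c (i + 1) ≠ c i := fun h => by
  have := cycle_index_eq_of_eq_succ hinj hclose hi hi h.symm
  omega

theorem cycle_not_mem_edge_and_mem_edge [DecidableEq α] (hk : 3 ≤ k) {i j : ℕ} (hi : i < k)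
    (hj : j < k) (hij : i ≠ j) :
    ¬ (c j ∈ ({c i, c (i + 1)} : Finset α) ∧ c i ∈ ({c j, c (j + 1)} : Finset α)) := by
  have hpos : ∀ a < k, ∀ b < k, c a ∈ ({c b, c (b + 1)} : Finset α) →
      a = b ∨ a = b + 1 ∨ (b + 1 = k ∧ a = 0) := fun a ha b hb h => by
    rcases Finset.mem_insert.mp h with h | h
    · exact .inl (hinj a ha b hb h)
    · exact .inr (cycle_index_eq_of_eq_succ hinj hclose ha hb (Finset.mem_singleton.mp h))
  rintro ⟨h₁, h₂⟩
  have := hpos j hj i hi h₁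
  have := hpos i hi j hj h₂
  omega

end CycleIndex

section ClosedPath

variable {V : Type*}

theorem hasClosedPath.exists_subset_forall_exists_succ {S : Set (Finset V × Finset V)}
    (h : hasClosedPath S) :
    ∃ T ⊆ S, T.Nonempty ∧ ∀ r ∈ T, ∃ r' ∈ T, r'.1 ⊆ r.2 ∧ r'.1 ≠ r.1 := by
  obtain ⟨k, α, β, hk, hstep, hcl⟩ := h
  refine ⟨{r | ∃ i < k, r = (α i, β i)}, ?_, ⟨_, 0, hk, rfl⟩, ?_⟩
  · rintro _ ⟨i, hi, rfl⟩
    exact (hstep i hi).1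
  · rintro _ ⟨i, hi, rfl⟩
    have hnext : ∃ j < k, α j = α (i + 1) := by
      rcases Nat.lt_or_ge (i + 1) k with hi' | hi'
      · exact ⟨i + 1, hi', rfl⟩
      · exact ⟨0, hk, by rw [show i + 1 = k by omega, hcl]⟩
    obtain ⟨j, hj, hαj⟩ := hnext
    exact ⟨_, ⟨j, hj, rfl⟩, hαj ▸ (hstep i hi).2.1, hαj ▸ (hstep i hi).2.2.2⟩

theorem not_hasClosedPath_singleton (p : Finset V × Finset V) :
    ¬ hasClosedPath ({p} : Set (Finset V × Finset V)) := by
  intro h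
  obtain ⟨T, hT, ⟨r, hr⟩, hsucc⟩ := h.exists_subset_forall_exists_succ
  obtain ⟨r', hr', -, hne⟩ := hsucc r hr
  exact hne (by rw [hT hr, hT hr'])

theorem subset_and_subset_of_hasClosedPath_pair {p q : Finset V × Finset V}
    (h : hasClosedPath ({p, q} : Set (Finset V × Finset V))) :
    q.1 ⊆ p.2 ∧ p.1 ⊆ q.2 := by
  obtain ⟨T, hT, ⟨r, hr⟩, hsucc⟩ := h.exists_subset_forall_exists_succ
  obtain ⟨r', hr', hsub, hne⟩ := hsucc r hr
  obtain ⟨r'', hr'', hsub', hne'⟩ := hsucc r' hr'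
  rcases hT hr with rfl | rfl <;> rcases hT hr' with rfl | rfl <;> rcases hT hr'' with rfl | rfl
  all_goals first
    | exact absurd rfl hne | exact absurd rfl hne' | exact ⟨hsub, hsub'⟩ | exact ⟨hsub', hsub⟩

end ClosedPath

def IsPrimitivePair {V : Type*} (K : ASC V) (p : Finset V × Finset V) : Prop :=
  p.1 ∈ K.faces ∧ p.2 ∈ K.faces ∧ p.1 ⊆ p.2 ∧ p.2.card = p.1.card + 1

namespace MorseComplex

variable {V : Type*} {K : ASC V}

theorem singleton_mem_faces_iff {p : Finset V × Finset V} :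
    {p} ∈ (MorseComplex K).faces ↔ IsPrimitivePair K p := by
  refine ⟨fun h => h.2.1.1 p (by simp), fun hp => ⟨Finset.singleton_nonempty p, ⟨?_, ?_⟩, ?_⟩⟩
  · rintro q hq
    obtain rfl := Finset.mem_singleton.mp hq
    exact hp
  · simp
  · simpa using not_hasClosedPath_singleton p

theorem pair_mem_faces [DecidableEq V] {p q : Finset V × Finset V} (hp : IsPrimitivePair K p)
    (hq : IsPrimitivePair K q) (hdisj : p.1 ≠ q.1 ∧ p.1 ≠ q.2 ∧ p.2 ≠ q.1 ∧ p.2 ≠ q.2)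
    (hnot : ¬ (q.1 ⊆ p.2 ∧ p.1 ⊆ q.2)) : {p, q} ∈ (MorseComplex K).faces := by
  refine ⟨Finset.insert_nonempty _ _, ⟨?_, ?_⟩, ?_⟩
  · simp only [Finset.coe_insert, Finset.coe_singleton, Set.mem_insert_iff,
      Set.mem_singleton_iff, forall_eq_or_imp, forall_eq]
    exact ⟨hp, hq⟩
  · simp only [Finset.coe_insert, Finset.coe_singleton, Set.mem_insert_iff,
      Set.mem_singleton_iff, forall_eq_or_imp, forall_eq]
    obtain ⟨h₁, h₂, h₃, h₄⟩ := hdisj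
    exact ⟨⟨fun h => absurd rfl h, fun _ => ⟨h₁, h₂, h₃, h₄⟩⟩,
      fun _ => ⟨h₁.symm, h₃.symm, h₂.symm, h₄.symm⟩, fun h => absurd rfl h⟩
  · simpa using fun h => hnot (subset_and_subset_of_hasClosedPath_pair h)

theorem isMatching_of_pairwise [DecidableEq V] {s : Finset (Finset V × Finset V)}
    (hs : ∀ p ∈ s, {p} ∈ (MorseComplex K).faces)
    (hpair : ∀ p ∈ s, ∀ q ∈ s, p ≠ q → {p, q} ∈ (MorseComplex K).faces) :
    IsMatching K.faces ↑s :=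
  ⟨fun p hp => singleton_mem_faces_iff.mp (hs p hp),
    fun p hp q hq hpq => (hpair p hp q hq hpq).2.1.2 p (by simp) q (by simp) hpq⟩

end MorseComplex

section Forest

variable {V : Type*} [DecidableEq V] {K : ASC V}

theorem IsMatching.not_hasClosedPath {M : Set (Finset V × Finset V)} (hM : IsMatching K.faces M)
    (hdim : ∀ s ∈ K.faces, s.card ≤ 2) (hK : ¬ K.HasCycle) : ¬ hasClosedPath M := by
  rintro ⟨m, α, β, hm, hstep, hcl⟩
  have hmem : ∀ i < m, (α i, β i) ∈ M := fun i hi => (hstep i hi).1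
  have hvertex : ∀ i < m, (α i).card = 1 := fun i hi => by
    obtain ⟨hα, hβ, -, hcard⟩ := hM.1 _ (hmem i hi)
    have h₂ : (β i).card ≤ 2 := hdim _ hβ
    have h₀ : 0 < (α i).card := (K.nonempty_of_mem hα).card_pos
    dsimp only at hcard
    omega
  have hc : ∀ i, ∃ v, i ≤ m → α i = {v} := by
    intro i
    obtain ⟨v₀, hv₀⟩ := Finset.card_eq_one.mp (hvertex 0 hm)
    rcases Nat.lt_or_ge i m with hi | hi
    · obtain ⟨v, hv⟩ := Finset.card_eq_one.mp (hvertex i hi)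
      exact ⟨v, fun _ => hv⟩
    · exact ⟨v₀, fun hi' => by rw [show i = m by omega, hcl, hv₀]⟩
  choose c hc using hc
  have hne : ∀ i < m, c (i + 1) ≠ c i := fun i hi h =>
    (hstep i hi).2.2.2 (by rw [hc i hi.le, hc (i + 1) hi, h])
  have hedge : ∀ i < m, β i = {c i, c (i + 1)} := by
    intro i hi
    obtain ⟨-, -, hαβ, hcard⟩ := hM.1 _ (hmem i hi)
    have hsub : {c i, c (i + 1)} ⊆ β i := by
      rw [Finset.insert_subset_iff, Finset.singleton_subset_iff, ← Finset.singleton_subset_iff,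
        ← Finset.singleton_subset_iff, ← hc i hi.le, ← hc (i + 1) hi]
      exact ⟨hαβ, (hstep i hi).2.1⟩
    refine (Finset.eq_of_subset_of_card_le hsub ?_).symm
    rw [Finset.card_pair (hne i hi).symm, hcard, hvertex i hi]
  refine hK (K.hasCycle_of_closedWalk hm ?_ hne ?_
    fun i hi => hedge i hi ▸ (hM.1 _ (hmem i hi)).2.1)
  · exact Finset.singleton_inj.mp (by rw [← hc m le_rfl, ← hc 0 hm.le, hcl])
  · intro i hi hback
    have hαne : (α i, β i) ≠ (α (i + 1), β (i + 1)) := fun h =>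
      (hstep i (by omega)).2.2.2 (congrArg Prod.fst h).symm
    refine (hM.2 _ (hmem i (by omega)) _ (hmem (i + 1) (by omega)) hαne).2.2.2 ?_
    rw [hedge i (by omega), hedge (i + 1) (by omega), hback, Finset.pair_comm]

end Forest

section Flag

variable {V : Type*} [DecidableEq V] {K : ASC V}

theorem ASC.not_hasCycle_of_isFlag_morseComplex (hflag : (MorseComplex K).IsFlag) :
    ¬ K.HasCycle := by
  rintro ⟨k, c, hk, hinj, hedge, hclose⟩
  have hne : ∀ i < k, c (i + 1) ≠ c i := fun i hi => cycle_succ_ne hinj hclose (by omega) hi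
  have hcard : ∀ i < k, ({c i, c (i + 1)} : Finset V).card = 2 := fun i hi =>
    Finset.card_pair (hne i hi).symm
  set p : ℕ → Finset V × Finset V := fun i => ({c i}, {c i, c (i + 1)})
  have hprim : ∀ i < k, IsPrimitivePair K (p i) := fun i hi =>
    ⟨K.down_closed (hedge i hi) (by simp [p]) (Finset.singleton_nonempty _), hedge i hi,
      by simp [p], by simp [p, hcard i hi]⟩
  have hpair : ∀ i < k, ∀ j < k, i ≠ j → {p i, p j} ∈ (MorseComplex K).faces := by
    intro i hi j hj hij
    have hmutual := cycle_not_mem_edge_and_mem_edge hinj hclose hk hi hj hij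
    refine MorseComplex.pair_mem_faces (hprim i hi) (hprim j hj) ⟨?_, ?_, ?_, ?_⟩ ?_
    · exact fun h => hij (hinj i hi j hj (Finset.singleton_inj.mp h))
    · exact fun h => by simpa [p, hcard j hj] using congrArg Finset.card h
    · exact fun h => by simpa [p, hcard i hi] using congrArg Finset.card h
    · intro h
      change ({c i, c (i + 1)} : Finset V) = {c j, c (j + 1)} at h
      exact hmutual ⟨by rw [h]; simp, by rw [← h]; simp⟩
    · simpa [p] using hmutual
  have hface : (Finset.range k).image p ∈ (MorseComplex K).faces := by
    refine hflag _ ⟨p 0, Finset.mem_image_of_mem p (by simp; omega)⟩ ?_ ?_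
    · simp only [Finset.forall_mem_image, Finset.mem_range]
      exact fun i hi => MorseComplex.singleton_mem_faces_iff.mpr (hprim i hi)
    · simp only [Finset.forall_mem_image, Finset.mem_range]
      exact fun i hi j hj hne => hpair i hi j hj fun h => hne (h ▸ rfl)
  refine hface.2.2 ⟨k, fun i => {c i}, fun i => {c i, c (i + 1)}, by omega, fun i hi => ?_, ?_⟩
  · exact ⟨Finset.mem_image_of_mem p (Finset.mem_range.mpr hi), by simp, by simp [hcard i hi],
      fun h => hne i hi (Finset.singleton_inj.mp h)⟩
  · simp [hclose]

theorem ASC.isFlag_morseComplex_of_not_hasCycle (hdim : ∀ s ∈ K.faces, s.card ≤ 2)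
    (hK : ¬ K.HasCycle) :
    (MorseComplex K).IsFlag := fun _ hs hsingle hpair =>
  have hmatch := MorseComplex.isMatching_of_pairwise hsingle hpair
  ⟨hs, hmatch, hmatch.not_hasClosedPath hdim hK⟩

end Flag

theorem morse_flag_iff_tree_general {V : Type*} [DecidableEq V] (K : ASC V)
    (hconn : K.Connected) :
    (MorseComplex K).IsFlag ↔ K.IsTree := by
  refine ⟨fun hflag => ?_, fun ⟨hdim, _, hK⟩ => ASC.isFlag_morseComplex_of_not_hasCycle hdim hK⟩
  have hK := ASC.not_hasCycle_of_isFlag_morseComplex hflag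
  exact ⟨fun s hs => ASC.card_le_two_of_not_hasCycle hK hs, hconn, hK⟩

/-- The Morse complex of a finite connected simplicial complex `K` is a
flag complex if and only if `K` is a tree. -/
theorem morse_flag_iff_tree {V : Type*} [Fintype V] [DecidableEq V] (K : ASC V)
    (hne : K.faces.Nonempty) (hconn : K.Connected) :
    (MorseComplex K).IsFlag ↔ K.IsTree :=
  morse_flag_iff_tree_general K hconn
end

section
/- The star cluster of a simplex in a finite flag simplicial complex is collapsible. -/
namespace SCAux

open Finset

theorem ASC_ext {V : Type*} {K L : ASC V} (h : K.faces = L.faces) : K = L := by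
  cases K; cases L; simpa using h

theorem collapsesTo_trans {V : Type*} {K L M : ASC V}
    (h1 : ASC.CollapsesTo K L) (h2 : ASC.CollapsesTo L M) : ASC.CollapsesTo K M := by
  induction h1 with
  | refl => exact h2
  | step σ τ hσ hτ hst hfree hL _ ih =>
      exact ASC.CollapsesTo.step σ τ hσ hτ hst hfree hL (ih h2)

/-- Remove a free pair from a complex. -/
def removePair {V : Type*} (C : ASC V) (σ τ : Finset V) (hst : σ ⊂ τ)
    (hfree : ∀ ρ ∈ C.faces, σ ⊂ ρ → ρ = τ) : ASC V where
  faces := C.faces \ {σ, τ}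
  nonempty_of_mem h := C.nonempty_of_mem h.1
  down_closed := by
    rintro a b ⟨ha, hnot⟩ hba hbne
    simp only [Set.mem_insert_iff, Set.mem_singleton_iff, not_or] at hnot
    refine ⟨C.down_closed ha hba hbne, ?_⟩
    simp only [Set.mem_insert_iff, Set.mem_singleton_iff, not_or]
    constructor
    · rintro rfl
      rcases eq_or_lt_of_le hba with heq | hlt
      · exact hnot.1 heq.symm
      · exact hnot.2 (hfree a ha hlt)
    · rintro rfl
      exact hnot.2 (hfree a ha (lt_of_lt_of_le hst hba))

theorem collapse_step {V : Type*} (C : ASC V) {M : ASC V} (σ τ : Finset V)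
    (hσ : σ ∈ C.faces) (hτ : τ ∈ C.faces) (hst : σ ⊂ τ)
    (hfree : ∀ ρ ∈ C.faces, σ ⊂ ρ → ρ = τ)
    (h : ASC.CollapsesTo (removePair C σ τ hst hfree) M) : ASC.CollapsesTo C M :=
  ASC.CollapsesTo.step σ τ hσ hτ hst hfree rfl h

section Order

variable {V : Type*} [DecidableEq V] [LinearOrder V]

open Classical in
/-- The set of vertices of `s` that can be added to `τ` within `K`. -/
noncomputable def Fs (K : ASC V) (s τ : Finset V) : Finset V :=
  s.filter (fun v => insert v τ ∈ K.faces)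

theorem mem_Fs {K : ASC V} {s τ : Finset V} {v : V} :
    v ∈ Fs K s τ ↔ v ∈ s ∧ insert v τ ∈ K.faces := by
  classical
  simp [Fs]

/-- The minimal vertex of `s` that can be added to `τ` (default `d`). -/
noncomputable def mv (K : ASC V) (s τ : Finset V) (d : V) : V :=
  if h : (Fs K s τ).Nonempty then (Fs K s τ).min' h else d

theorem mv_mem {K : ASC V} {s τ : Finset V} (d : V) (h : (Fs K s τ).Nonempty) :
    mv K s τ d ∈ Fs K s τ := by
  rw [mv, dif_pos h]; exact Finset.min'_mem _ h

theorem mv_le {K : ASC V} {s τ : Finset V} (d : V) {v : V} (hv : v ∈ Fs K s τ) :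
    mv K s τ d ≤ v := by
  rw [mv, dif_pos ⟨v, hv⟩]; exact Finset.min'_le _ v hv

theorem Fs_anti {K : ASC V} {s τ ρ : Finset V} (h : τ ⊆ ρ) : Fs K s ρ ⊆ Fs K s τ := by
  intro v hv
  rw [mem_Fs] at hv ⊢
  exact ⟨hv.1, K.down_closed hv.2 (Finset.insert_subset_insert v h) (Finset.insert_nonempty v τ)⟩

theorem mv_insert {K : ASC V} {s τ : Finset V} (d : V) (h : (Fs K s τ).Nonempty) :
    mv K s (insert (mv K s τ d) τ) d = mv K s τ d := by
  set μ := mv K s τ d with hμ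
  have hμF : μ ∈ Fs K s τ := mv_mem d h
  have hμF' : μ ∈ Fs K s (insert μ τ) := by
    rw [mem_Fs] at hμF ⊢
    exact ⟨hμF.1, by rw [Finset.insert_idem]; exact hμF.2⟩
  have h1 : mv K s (insert μ τ) d ≤ μ := mv_le d hμF'
  have h2 : μ ≤ mv K s (insert μ τ) d :=
    mv_le d (Fs_anti (Finset.subset_insert μ τ) (mv_mem d ⟨μ, hμF'⟩))
  exact le_antisymm h1 h2

theorem mv_mem_s {K : ASC V} {s τ : Finset V} (d : V) (h : (Fs K s τ).Nonempty) :
    mv K s τ d ∈ s := (mem_Fs.mp (mv_mem d h)).1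

theorem insert_mv_mem {K : ASC V} {s τ : Finset V} (d : V) (h : (Fs K s τ).Nonempty) :
    insert (mv K s τ d) τ ∈ K.faces := (mem_Fs.mp (mv_mem d h)).2

/-- The key flag-complex lemma: removing the matched vertex does not change the
minimal addable vertex. -/
theorem mv_erase {K : ASC V} (hflag : K.IsFlag) {s : Finset V} (hsK : s ∈ K.faces)
    {τ : Finset V} (hτ : τ ∈ K.faces) (d : V) (h : (Fs K s τ).Nonempty)
    (hμτ : mv K s τ d ∈ τ) (hne : (τ.erase (mv K s τ d)).Nonempty) :
    mv K s (τ.erase (mv K s τ d)) d = mv K s τ d := by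
  set μ := mv K s τ d with hμdef
  set τ' := τ.erase μ with hτ'def
  have hsub : Fs K s τ ⊆ Fs K s τ' := Fs_anti (Finset.erase_subset μ τ)
  have hne' : (Fs K s τ').Nonempty := ⟨μ, hsub (mv_mem d h)⟩
  have h1 : mv K s τ' d ≤ μ := mv_le d (hsub (mv_mem d h))
  set u := mv K s τ' d with hudef
  have hu : u ∈ Fs K s τ' := mv_mem d hne'
  rw [mem_Fs] at hu
  have hμs : μ ∈ s := mv_mem_s d h
  -- show `insert u τ ∈ K.faces` using flagness
  have key : insert u τ ∈ K.faces := by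
    by_cases huτ : u ∈ τ
    · rwa [Finset.insert_eq_self.mpr huτ]
    · apply hflag (insert u τ) (Finset.insert_nonempty u τ)
      · intro v hv
        rcases Finset.mem_insert.mp hv with rfl | hvτ
        · exact K.down_closed hsK (Finset.singleton_subset_iff.mpr hu.1)
            (Finset.singleton_nonempty _)
        · exact K.down_closed hτ (Finset.singleton_subset_iff.mpr hvτ)
            (Finset.singleton_nonempty _)
      · have pair : ∀ x ∈ τ, ({u, x} : Finset V) ∈ K.faces := by
          intro x hx
          by_cases hxμ : x = μ
          · subst hxμ
            exact K.down_closed hsK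
              (Finset.insert_subset hu.1 (Finset.singleton_subset_iff.mpr hμs))
              ⟨u, Finset.mem_insert_self u _⟩
          · have hxτ' : x ∈ τ' := Finset.mem_erase.mpr ⟨hxμ, hx⟩
            exact K.down_closed hu.2
              (Finset.insert_subset (Finset.mem_insert_self u τ')
                (Finset.singleton_subset_iff.mpr (Finset.mem_insert_of_mem hxτ')))
              ⟨u, Finset.mem_insert_self u _⟩
        intro x hx y hy hxy
        rcases Finset.mem_insert.mp hx with rfl | hxτ
        · rcases Finset.mem_insert.mp hy with rfl | hyτ
          · exact absurd rfl hxy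
          · exact pair y hyτ
        · rcases Finset.mem_insert.mp hy with rfl | hyτ
          · rw [Finset.pair_comm]; exact pair x hxτ
          · exact K.down_closed hτ
              (Finset.insert_subset hxτ (Finset.singleton_subset_iff.mpr hyτ))
              ⟨x, Finset.mem_insert_self x _⟩
  have huF : u ∈ Fs K s τ := mem_Fs.mpr ⟨hu.1, key⟩
  exact le_antisymm h1 (mv_le d huF)

/-- Membership in the star cluster. -/
theorem mem_SC {K : ASC V} {s τ : Finset V} :
    τ ∈ (K.starCluster s).faces ↔ ∃ v ∈ s, τ ∈ K.faces ∧ insert v τ ∈ K.faces := by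
  simp only [ASC.starCluster, ASC.star, Set.mem_iUnion, Set.mem_setOf_eq]
  constructor
  · rintro ⟨v, hv, h1, h2⟩; exact ⟨v, hv, h1, h2⟩
  · rintro ⟨v, hv, h1, h2⟩; exact ⟨v, hv, h1, h2⟩

theorem mem_star {K : ASC V} {v : V} {τ : Finset V} :
    τ ∈ (K.star v).faces ↔ τ ∈ K.faces ∧ insert v τ ∈ K.faces := Iff.rfl

theorem SC_sub {K : ASC V} {s τ : Finset V} (h : τ ∈ (K.starCluster s).faces) :
    τ ∈ K.faces := by
  obtain ⟨v, _, h1, _⟩ := mem_SC.mp h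
  exact h1

theorem Fs_nonempty_of_SC {K : ASC V} {s τ : Finset V} (h : τ ∈ (K.starCluster s).faces) :
    (Fs K s τ).Nonempty := by
  obtain ⟨v, hv, _, h2⟩ := mem_SC.mp h
  exact ⟨v, mem_Fs.mpr ⟨hv, h2⟩⟩

/-- If `insert v1 τ ∈ K` where `v1 = min s`, then `mv = v1`. -/
theorem mv_eq_min {K : ASC V} {s : Finset V} (hsne : s.Nonempty) {τ : Finset V} (d : V) (h : insert (s.min' hsne) τ ∈ K.faces) :
    mv K s τ d = s.min' hsne := by
  have hv1 : s.min' hsne ∈ Fs K s τ := mem_Fs.mpr ⟨Finset.min'_mem s hsne, h⟩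
  refine le_antisymm (mv_le d hv1) (Finset.min'_le s _ (mv_mem_s d ⟨_, hv1⟩))

/-- A "bad" simplex is not equal to the singleton of its matched vertex. -/
theorem erase_nonempty_of_bad {K : ASC V} {s : Finset V} (hs : s ∈ K.faces)
    (hsne : s.Nonempty) {τ : Finset V} {d : V}
    (hτSC : τ ∈ (K.starCluster s).faces) (hbad : mv K s τ d ≠ s.min' hsne)
    (hμτ : mv K s τ d ∈ τ) : (τ.erase (mv K s τ d)).Nonempty := by
  set μ := mv K s τ d with hμdef
  have hFne := Fs_nonempty_of_SC hτSC
  by_contra hcon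
  rw [Finset.not_nonempty_iff_eq_empty] at hcon
  have hτμ : τ = {μ} := by
    apply Finset.eq_singleton_iff_unique_mem.mpr
    refine ⟨hμτ, fun x hx => ?_⟩
    by_contra hxμ
    exact (Finset.notMem_empty x) (hcon ▸ Finset.mem_erase.mpr ⟨hxμ, hx⟩)
  have hμs : μ ∈ s := mv_mem_s d hFne
  have : insert (s.min' hsne) τ ∈ K.faces := by
    apply K.down_closed hs
    · rw [hτμ]
      exact Finset.insert_subset (Finset.min'_mem s hsne)
        (Finset.singleton_subset_iff.mpr hμs)
    · exact Finset.insert_nonempty _ _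
  exact hbad (mv_eq_min hsne d this)

/-- The matching partner of a simplex. -/
noncomputable def pr (K : ASC V) (s : Finset V) (d : V) (τ : Finset V) : Finset V :=
  if mv K s τ d ∈ τ then τ.erase (mv K s τ d) else insert (mv K s τ d) τ

/-- Basic properties of the matching. -/
theorem pr_spec {K : ASC V} {s : Finset V} (hflag : K.IsFlag) (hs : s ∈ K.faces)
    (hsne : s.Nonempty) {τ : Finset V} {d : V}
    (hτSC : τ ∈ (K.starCluster s).faces) (hbad : mv K s τ d ≠ s.min' hsne) :
    pr K s d τ ∈ (K.starCluster s).faces ∧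
      mv K s (pr K s d τ) d = mv K s τ d ∧ pr K s d (pr K s d τ) = τ := by
  have hF : (Fs K s τ).Nonempty := Fs_nonempty_of_SC hτSC
  have hτK : τ ∈ K.faces := SC_sub hτSC
  have hμs : mv K s τ d ∈ s := mv_mem_s d hF
  have hins : insert (mv K s τ d) τ ∈ K.faces := insert_mv_mem d hF
  by_cases hμτ : mv K s τ d ∈ τ
  · have hp : pr K s d τ = τ.erase (mv K s τ d) := by rw [pr, if_pos hμτ]
    have hne : (τ.erase (mv K s τ d)).Nonempty := erase_nonempty_of_bad hs hsne hτSC hbad hμτ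
    have hm' : mv K s (τ.erase (mv K s τ d)) d = mv K s τ d :=
      mv_erase hflag hs hτK d hF hμτ hne
    have hSC' : τ.erase (mv K s τ d) ∈ (K.starCluster s).faces := by
      refine mem_SC.mpr ⟨mv K s τ d, hμs,
        K.down_closed hτK (Finset.erase_subset _ _) hne, ?_⟩
      rw [Finset.insert_erase hμτ]
      exact hτK
    refine ⟨hp ▸ hSC', hp ▸ hm', ?_⟩
    rw [hp, pr, hm', if_neg (Finset.notMem_erase _ _), Finset.insert_erase hμτ]
  · have hp : pr K s d τ = insert (mv K s τ d) τ := by rw [pr, if_neg hμτ]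
    have hm' : mv K s (insert (mv K s τ d) τ) d = mv K s τ d := mv_insert d hF
    have hSC' : insert (mv K s τ d) τ ∈ (K.starCluster s).faces := by
      refine mem_SC.mpr ⟨mv K s τ d, hμs, hins, ?_⟩
      rw [Finset.insert_idem]
      exact hins
    refine ⟨hp ▸ hSC', hp ▸ hm', ?_⟩
    rw [hp, pr, hm', if_pos (Finset.mem_insert_self _ _), Finset.erase_insert hμτ]

/-- Main induction: a complex consisting of the star of `min s` together with a
matching-closed family of "bad" faces of the star cluster collapses to the star. -/
theorem collapse_to_star {K : ASC V} {s : Finset V} (hflag : K.IsFlag) (hs : s ∈ K.faces)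
    (hsne : s.Nonempty) :
    ∀ (n : ℕ) (Q : Finset (Finset V)) (C : ASC V),
      Q.card ≤ n →
      C.faces = (K.star (s.min' hsne)).faces ∪ ↑Q →
      (∀ τ ∈ Q, τ ∈ (K.starCluster s).faces ∧
        mv K s τ (s.min' hsne) ≠ s.min' hsne) →
      (∀ τ ∈ Q, pr K s (s.min' hsne) τ ∈ Q) →
      ASC.CollapsesTo C (K.star (s.min' hsne)) := by
  intro n
  induction n with
  | zero =>
    intro Q C hcard hCf _ _
    have hQ : Q = ∅ := Finset.card_eq_zero.mp (Nat.le_zero.mp hcard)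
    subst hQ
    rw [ASC_ext (show C.faces = (K.star (s.min' hsne)).faces by simpa using hCf)]
    exact ASC.CollapsesTo.refl _
  | succ n ih =>
    intro Q C hcard hCf hQgood hQcl
    rcases Q.eq_empty_or_nonempty with rfl | hQne
    · rw [ASC_ext (show C.faces = (K.star (s.min' hsne)).faces by simpa using hCf)]
      exact ASC.CollapsesTo.refl _
    have hv1s : s.min' hsne ∈ s := Finset.min'_mem s hsne
    obtain ⟨T, hTQ, hTmax⟩ :=
      Q.exists_max_image (fun τ => toLex (mv K s τ (s.min' hsne), τ.card)) hQne
    obtain ⟨hTSC, hTbad⟩ := hQgood T hTQ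
    have hTF : (Fs K s T).Nonempty := Fs_nonempty_of_SC hTSC
    -- the matched vertex of the maximal face belongs to it
    have hμT : mv K s T (s.min' hsne) ∈ T := by
      by_contra hμT
      have hp : pr K s (s.min' hsne) T = insert (mv K s T (s.min' hsne)) T := by
        rw [pr, if_neg hμT]
      have hinsQ : insert (mv K s T (s.min' hsne)) T ∈ Q := hp ▸ hQcl T hTQ
      have hlex := hTmax _ hinsQ
      rw [Prod.Lex.le_iff] at hlex
      have hmins : mv K s (insert (mv K s T (s.min' hsne)) T) (s.min' hsne)
          = mv K s T (s.min' hsne) := mv_insert _ hTF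
      simp only [hmins, ofLex_toLex, Finset.card_insert_of_notMem hμT] at hlex
      rcases hlex with h | ⟨_, h⟩
      · exact lt_irrefl _ h
      · omega
    have hσ'Q : T.erase (mv K s T (s.min' hsne)) ∈ Q := by
      have hp : pr K s (s.min' hsne) T = T.erase (mv K s T (s.min' hsne)) := by
        rw [pr, if_pos hμT]
      exact hp ▸ hQcl T hTQ
    obtain ⟨hσ'SC, hσ'bad⟩ := hQgood _ hσ'Q
    have hσ'ne : (T.erase (mv K s T (s.min' hsne))).Nonempty :=
      erase_nonempty_of_bad hs hsne hTSC hTbad hμT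
    have hσ'm : mv K s (T.erase (mv K s T (s.min' hsne))) (s.min' hsne)
        = mv K s T (s.min' hsne) :=
      mv_erase hflag hs (SC_sub hTSC) _ hTF hμT hσ'ne
    have hsub : T.erase (mv K s T (s.min' hsne)) ⊂ T := Finset.erase_ssubset hμT
    have hσ'C : T.erase (mv K s T (s.min' hsne)) ∈ C.faces := by
      rw [hCf]; exact Or.inr (Finset.mem_coe.mpr hσ'Q)
    have hTC : T ∈ C.faces := by
      rw [hCf]; exact Or.inr (Finset.mem_coe.mpr hTQ)
    have hnstar : ∀ ρ ∈ Q, ρ ∉ (K.star (s.min' hsne)).faces := by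
      intro ρ hρ hmem
      exact (hQgood ρ hρ).2 (mv_eq_min hsne _ (mem_star.mp hmem).2)
    -- freeness of the pair
    have hfree : ∀ ρ ∈ C.faces, T.erase (mv K s T (s.min' hsne)) ⊂ ρ → ρ = T := by
      intro ρ hρ hσρ
      rw [hCf] at hρ
      rcases hρ with hρ | hρQ
      · exfalso
        have hins' : insert (s.min' hsne) (T.erase (mv K s T (s.min' hsne))) ∈ K.faces :=
          K.down_closed (mem_star.mp hρ).2
            (Finset.insert_subset_insert _ hσρ.subset) (Finset.insert_nonempty _ _)
        exact hσ'bad (mv_eq_min hsne _ hins')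
      · have hρQ' : ρ ∈ Q := Finset.mem_coe.mp hρQ
        have hρSC := (hQgood ρ hρQ').1
        have hρF : (Fs K s ρ).Nonempty := Fs_nonempty_of_SC hρSC
        have hge : mv K s T (s.min' hsne) ≤ mv K s ρ (s.min' hsne) := by
          rw [← hσ'm]
          exact mv_le _ (Fs_anti hσρ.subset (mv_mem _ hρF))
        have hlex := hTmax ρ hρQ'
        rw [Prod.Lex.le_iff] at hlex
        have hρm : mv K s ρ (s.min' hsne) = mv K s T (s.min' hsne) := by
          rcases hlex with h | ⟨h, _⟩
          · exact absurd (lt_of_le_of_lt hge h) (lt_irrefl _)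
          · exact h
        have hρcard : ρ.card ≤ T.card := by
          rcases hlex with h | ⟨_, h⟩
          · rw [hρm] at h; exact absurd h (lt_irrefl _)
          · exact h
        have hcards : (T.erase (mv K s T (s.min' hsne))).card = T.card - 1 :=
          Finset.card_erase_of_mem hμT
        have hTpos : 0 < T.card := Finset.card_pos.mpr ⟨_, hμT⟩
        have hlt : (T.erase (mv K s T (s.min' hsne))).card < ρ.card :=
          Finset.card_lt_card hσρ
        obtain ⟨w, hwρ, hwσ⟩ := Finset.exists_of_ssubset hσρ
        have hins' : insert w (T.erase (mv K s T (s.min' hsne))) ⊆ ρ :=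
          Finset.insert_subset hwρ hσρ.subset
        have hρeq : insert w (T.erase (mv K s T (s.min' hsne))) = ρ := by
          apply Finset.eq_of_subset_of_card_le hins'
          rw [Finset.card_insert_of_notMem hwσ]
          omega
        by_cases hw : w = mv K s T (s.min' hsne)
        · rw [← hρeq, hw, Finset.insert_erase hμT]
        · exfalso
          have hμρ : mv K s T (s.min' hsne) ∉ ρ := by
            rw [← hρeq]
            simp only [Finset.mem_insert, not_or]
            exact ⟨fun h => hw h.symm, Finset.notMem_erase _ _⟩
          have hp : pr K s (s.min' hsne) ρ = insert (mv K s T (s.min' hsne)) ρ := by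
            rw [pr, hρm, if_neg hμρ]
          have hinsQ : insert (mv K s T (s.min' hsne)) ρ ∈ Q := hp ▸ hQcl ρ hρQ'
          have hlex2 := hTmax _ hinsQ
          rw [Prod.Lex.le_iff] at hlex2
          have hmins : mv K s (insert (mv K s T (s.min' hsne)) ρ) (s.min' hsne)
              = mv K s T (s.min' hsne) := by
            have := mv_insert (s.min' hsne) hρF
            rwa [hρm] at this
          simp only [hmins, ofLex_toLex, Finset.card_insert_of_notMem hμρ] at hlex2
          rcases hlex2 with h | ⟨_, h⟩
          · exact lt_irrefl _ h
          · omega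
    -- perform the collapse and recurse
    apply collapse_step C _ T hσ'C hTC hsub hfree
    apply ih ((Q.erase (T.erase (mv K s T (s.min' hsne)))).erase T)
    · have h1 : (Q.erase (T.erase (mv K s T (s.min' hsne)))).card = Q.card - 1 :=
        Finset.card_erase_of_mem hσ'Q
      have h2 := Finset.card_erase_le
        (s := Q.erase (T.erase (mv K s T (s.min' hsne)))) (a := T)
      have h3 : 0 < Q.card := Finset.card_pos.mpr ⟨_, hσ'Q⟩
      omega
    · show C.faces \ _ = _
      rw [hCf]
      ext ρ
      simp only [Set.mem_diff, Set.mem_union, Set.mem_insert_iff, Set.mem_singleton_iff,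
        Finset.coe_erase, Set.mem_diff, Finset.mem_coe, not_or]
      constructor
      · rintro ⟨hst | hQ, hne1, hne2⟩
        · exact Or.inl hst
        · exact Or.inr ⟨⟨hQ, hne1⟩, hne2⟩
      · rintro (hst | ⟨⟨hQ, hne1⟩, hne2⟩)
        · exact ⟨Or.inl hst, fun h => hnstar _ hσ'Q (h ▸ hst), fun h => hnstar T hTQ (h ▸ hst)⟩
        · exact ⟨Or.inr hQ, hne1, hne2⟩
    · intro τ hτ
      exact hQgood τ (Finset.mem_of_mem_erase (Finset.mem_of_mem_erase hτ))
    · intro τ hτ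
      have hτT : τ ≠ T := (Finset.mem_erase.mp hτ).1
      have hτσ' : τ ≠ T.erase (mv K s T (s.min' hsne)) :=
        (Finset.mem_erase.mp (Finset.mem_of_mem_erase hτ)).1
      have hτQ : τ ∈ Q := Finset.mem_of_mem_erase (Finset.mem_of_mem_erase hτ)
      have hprQ : pr K s (s.min' hsne) τ ∈ Q := hQcl τ hτQ
      obtain ⟨hτSC2, hτbad2⟩ := hQgood τ hτQ
      have hinv := (pr_spec hflag hs hsne hτSC2 hτbad2).2.2
      have hprσ : pr K s (s.min' hsne) (T.erase (mv K s T (s.min' hsne))) = T := by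
        rw [pr, hσ'm, if_neg (Finset.notMem_erase _ _), Finset.insert_erase hμT]
      have hprT : pr K s (s.min' hsne) T = T.erase (mv K s T (s.min' hsne)) := by
        rw [pr, if_pos hμT]
      refine Finset.mem_erase.mpr ⟨?_, Finset.mem_erase.mpr ⟨?_, hprQ⟩⟩
      · intro h
        apply hτσ'
        rw [← hinv, h, hprT]
      · intro h
        apply hτT
        rw [← hinv, h, hprσ]

end Order

/-- A cone (with apex `v`) collapses to the point `v`. -/
theorem cone_collapses {V : Type*} [Fintype V] [DecidableEq V] (v : V) :
    ∀ (n : ℕ) (C : ASC V), (Set.toFinite C.faces).toFinset.card ≤ n →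
      {v} ∈ C.faces → (∀ τ ∈ C.faces, insert v τ ∈ C.faces) →
      ASC.CollapsesTo C (ASC.point v) := by
  intro n
  induction n with
  | zero =>
    intro C hcard hv _
    exfalso
    have h1 : ({v} : Finset V) ∈ (Set.toFinite C.faces).toFinset :=
      (Set.Finite.mem_toFinset _).mpr hv
    have := Finset.card_pos.mpr ⟨_, h1⟩
    omega
  | succ n ih =>
    intro C hcard hv hcone
    by_cases hall : ∀ τ ∈ C.faces, τ = {v}
    · have hC : C = ASC.point v := by
        apply ASC_ext
        ext τ
        constructor
        · intro h
          exact hall τ h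
        · intro h
          simp only [ASC.point, Set.mem_singleton_iff] at h
          rw [h]
          exact hv
      rw [hC]
      exact ASC.CollapsesTo.refl _
    · push_neg at hall
      obtain ⟨τ0, hτ0, hτ0ne⟩ := hall
      obtain ⟨T, hTmem, hTmax⟩ := Finset.exists_max_image (Set.toFinite C.faces).toFinset
        Finset.card ⟨τ0, (Set.Finite.mem_toFinset _).mpr hτ0⟩
      rw [Set.Finite.mem_toFinset] at hTmem
      have hTmax' : ∀ ρ ∈ C.faces, ρ.card ≤ T.card := fun ρ hρ =>
        hTmax ρ ((Set.Finite.mem_toFinset _).mpr hρ)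
      have hTv : T ≠ {v} := by
        rintro rfl
        have hcard1 : τ0.card = 1 :=
          le_antisymm (by simpa using hTmax' τ0 hτ0)
            (Finset.card_pos.mpr (C.nonempty_of_mem hτ0))
        obtain ⟨u, rfl⟩ := Finset.card_eq_one.mp hcard1
        have huv : u ≠ v := fun h => hτ0ne (by rw [h])
        have hle := hTmax' _ (hcone _ hτ0)
        rw [Finset.card_insert_of_notMem (by simp [huv.symm])] at hle
        simp at hle
      have hvT : v ∈ T := by
        by_contra hvT
        have := hTmax' _ (hcone T hTmem)
        rw [Finset.card_insert_of_notMem hvT] at this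
        omega
      have hσ'ne : (T.erase v).Nonempty := by
        by_contra hcon
        rw [Finset.not_nonempty_iff_eq_empty] at hcon
        apply hTv
        apply Finset.eq_singleton_iff_unique_mem.mpr
        refine ⟨hvT, fun x hx => ?_⟩
        by_contra hxv
        exact Finset.notMem_empty x (hcon ▸ Finset.mem_erase.mpr ⟨hxv, hx⟩)
      have hσ'C : T.erase v ∈ C.faces :=
        C.down_closed hTmem (Finset.erase_subset v T) hσ'ne
      have hsub : T.erase v ⊂ T := Finset.erase_ssubset hvT
      have hfree : ∀ ρ ∈ C.faces, T.erase v ⊂ ρ → ρ = T := by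
        intro ρ hρ hσρ
        have h1 : insert v ρ ∈ C.faces := hcone ρ hρ
        have hTsub : T ⊆ insert v ρ := by
          conv_lhs => rw [← Finset.insert_erase hvT]
          exact Finset.insert_subset_insert v hσρ.subset
        have hTeq : T = insert v ρ :=
          Finset.eq_of_subset_of_card_le hTsub (hTmax' _ h1)
        by_cases hvρ : v ∈ ρ
        · rw [hTeq]
          exact (Finset.insert_eq_self.mpr hvρ).symm
        · exfalso
          have hρσ : ρ ⊆ T.erase v := fun x hx =>
            Finset.mem_erase.mpr ⟨fun h => hvρ (h ▸ hx), by
              rw [hTeq]; exact Finset.mem_insert_of_mem hx⟩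
          exact absurd (lt_of_lt_of_le hσρ hρσ) (lt_irrefl _)
      apply collapse_step C _ T hσ'C hTmem hsub hfree
      apply ih
      · have hsubfin : (Set.toFinite (removePair C (T.erase v) T hsub hfree).faces).toFinset ⊆
            ((Set.toFinite C.faces).toFinset).erase (T.erase v) := by
          intro x hx
          rw [Set.Finite.mem_toFinset] at hx
          obtain ⟨hxC, hxn⟩ := hx
          simp only [Set.mem_insert_iff, Set.mem_singleton_iff, not_or] at hxn
          exact Finset.mem_erase.mpr ⟨hxn.1, (Set.Finite.mem_toFinset _).mpr hxC⟩
        have h1 := Finset.card_le_card hsubfin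
        have h2 : (((Set.toFinite C.faces).toFinset).erase (T.erase v)).card
            = (Set.toFinite C.faces).toFinset.card - 1 :=
          Finset.card_erase_of_mem ((Set.Finite.mem_toFinset _).mpr hσ'C)
        have h3 : 0 < (Set.toFinite C.faces).toFinset.card :=
          Finset.card_pos.mpr ⟨_, (Set.Finite.mem_toFinset _).mpr hσ'C⟩
        omega
      · refine ⟨hv, ?_⟩
        simp only [Set.mem_insert_iff, Set.mem_singleton_iff, not_or]
        constructor
        · intro h
          exact Finset.notMem_erase v T (h ▸ Finset.mem_singleton_self v)
        · exact fun h => hTv h.symm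
      · rintro τ ⟨hτC, hτn⟩
        simp only [Set.mem_insert_iff, Set.mem_singleton_iff, not_or] at hτn
        refine ⟨hcone τ hτC, ?_⟩
        simp only [Set.mem_insert_iff, Set.mem_singleton_iff, not_or]
        constructor
        · intro h
          exact Finset.notMem_erase v T (h ▸ Finset.mem_insert_self v τ)
        · intro h
          have hστ : T.erase v ⊆ τ := by
            intro x hx
            have hx' := Finset.mem_erase.mp hx
            have : x ∈ insert v τ := h ▸ hx'.2
            rcases Finset.mem_insert.mp this with h' | h'
            · exact absurd h' hx'.1
            · exact h'
          by_cases hvτ : v ∈ τ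
          · exact hτn.2 (by rw [← h, Finset.insert_eq_self.mpr hvτ])
          · apply hτn.1
            apply Finset.Subset.antisymm _ hστ
            intro x hx
            refine Finset.mem_erase.mpr ⟨fun h' => hvτ (h' ▸ hx), ?_⟩
            rw [← h]
            exact Finset.mem_insert_of_mem hx

end SCAux

/-- The star cluster of a simplex in a finite flag simplicial complex is
collapsible. -/
theorem starCluster_collapsible {V : Type*} [Fintype V] [DecidableEq V] (K : ASC V)
    (hflag : K.IsFlag) (s : Finset V) (hs : s ∈ K.faces) :
    (K.starCluster s).Collapsible := by
  classical
  letI : LinearOrder V := LinearOrder.lift' (Fintype.equivFin V) (Fintype.equivFin V).injective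
  have hsne : s.Nonempty := K.nonempty_of_mem hs
  have hv1s : s.min' hsne ∈ s := Finset.min'_mem s hsne
  have hv1K : ({s.min' hsne} : Finset V) ∈ K.faces :=
    K.down_closed hs (Finset.singleton_subset_iff.mpr hv1s) (Finset.singleton_nonempty _)
  refine ⟨s.min' hsne, SCAux.collapsesTo_trans (L := K.star (s.min' hsne)) ?_ ?_⟩
  · -- the star cluster collapses to the star of `min s`
    set Q0 := (Set.toFinite {τ : Finset V | τ ∈ (K.starCluster s).faces ∧
        SCAux.mv K s τ (s.min' hsne) ≠ s.min' hsne}).toFinset with hQ0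
    apply SCAux.collapse_to_star hflag hs hsne Q0.card Q0 _ le_rfl ?_ ?_ ?_
    · -- decomposition of the star cluster
      ext τ
      simp only [Set.mem_union, Finset.mem_coe, hQ0, Set.Finite.mem_toFinset, Set.mem_setOf_eq]
      constructor
      · intro h
        by_cases hb : SCAux.mv K s τ (s.min' hsne) = s.min' hsne
        · left
          refine SCAux.mem_star.mpr ⟨SCAux.SC_sub h, ?_⟩
          have := SCAux.insert_mv_mem (s.min' hsne) (SCAux.Fs_nonempty_of_SC h)
          rwa [hb] at this
        · right
          exact ⟨h, hb⟩
      · rintro (h | ⟨h, _⟩)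
        · exact SCAux.mem_SC.mpr ⟨s.min' hsne, hv1s, (SCAux.mem_star.mp h).1,
            (SCAux.mem_star.mp h).2⟩
        · exact h
    · intro τ hτ
      rw [hQ0, Set.Finite.mem_toFinset] at hτ
      exact hτ
    · intro τ hτ
      rw [hQ0, Set.Finite.mem_toFinset] at hτ ⊢
      obtain ⟨hSC, hbad⟩ := hτ
      obtain ⟨h1, h2, _⟩ := SCAux.pr_spec hflag hs hsne hSC hbad
      refine ⟨h1, ?_⟩
      rw [h2]
      exact hbad
  · -- the star of `min s` is a cone, hence collapses to a point
    apply SCAux.cone_collapses (s.min' hsne) _ (K.star (s.min' hsne)) le_rfl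
    · exact SCAux.mem_star.mpr ⟨hv1K, by
        rw [Finset.insert_eq_self.mpr (Finset.mem_singleton_self _)]; exact hv1K⟩
    · intro τ hτ
      obtain ⟨h1, h2⟩ := SCAux.mem_star.mp hτ
      exact SCAux.mem_star.mpr ⟨h2, by rwa [Finset.insert_idem]⟩
end

section
/- Cluster Lemma: Let Δ be a simplicial complex decomposed as a union of collections Δ_σ of simplices indexed by elements σ of a poset P with a unique minimal element, such that (1) each simplex of Δ belongs to exactly one Δ_σ, and (2) for each σ ∈ P, the union of Δ_τ over τ ≤ σ is a subcomplex of Δ. If M_σ is an acyclic matching on Δ_σ for each σ, then the union of the M_σ is an acyclic matching on Δ. -/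
open Function

section ClusterLemma

variable {V P : Type*} {D : P → Set (Finset V)}
  {M : P → Set (Finset V × Finset V)}

theorem eq_of_mem_of_mem_of_pairwise_disjoint (hdisj : Pairwise (Disjoint on D))
    {s : Finset V} {σ τ : P} (hσ : s ∈ D σ) (hτ : s ∈ D τ) : σ = τ := by
  by_contra hne
  exact Set.disjoint_left.mp (hdisj hne) hσ hτ

theorem IsMatching.iUnion {C : Set (Finset V)} (hD : ∀ σ, D σ ⊆ C)
    (hdisj : Pairwise (Disjoint on D)) (hM : ∀ σ, IsMatching (D σ) (M σ)) :
    IsMatching C (⋃ σ, M σ) := by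
  refine ⟨fun p hp => ?_, fun p hp q hq hpq => ?_⟩
  · obtain ⟨σ, hσ⟩ := Set.mem_iUnion.mp hp
    obtain ⟨h1, h2, hsub, hcard⟩ := (hM σ).1 p hσ
    exact ⟨hD σ h1, hD σ h2, hsub, hcard⟩
  · obtain ⟨σ, hpσ⟩ := Set.mem_iUnion.mp hp
    obtain ⟨τ, hqτ⟩ := Set.mem_iUnion.mp hq
    obtain rfl | hστ := eq_or_ne σ τ
    · exact (hM σ).2 p hpσ q hqτ hpq
    obtain ⟨hp1, hp2, -⟩ := (hM σ).1 p hpσ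
    obtain ⟨hq1, hq2, -⟩ := (hM τ).1 q hqτ
    have hne : ∀ {s t : Finset V}, s ∈ D σ → t ∈ D τ → s ≠ t := fun hs ht hst =>
      hστ (eq_of_mem_of_mem_of_pairwise_disjoint hdisj hs (hst ▸ ht))
    exact ⟨hne hp1 hq1, hne hp1 hq2, hne hp2 hq1, hne hp2 hq2⟩

theorem le_of_subset_of_mem [PartialOrder P] (hdisj : Pairwise (Disjoint on D))
    (hlower : ∀ σ, ∀ s ∈ D σ, ∀ t ⊆ s, t.Nonempty → ∃ τ ≤ σ, t ∈ D τ)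
    {s t : Finset V} {σ τ : P} (hs : s ∈ D σ) (hts : t ⊆ s) (ht : t ∈ D τ)
    (htne : t.Nonempty) : τ ≤ σ := by
  obtain ⟨ρ, hρσ, htρ⟩ := hlower σ s hs t hts htne
  rwa [eq_of_mem_of_mem_of_pairwise_disjoint hdisj ht htρ]

theorem apply_eq_apply_zero_of_succ_le_of_apply_eq {α : Type*} [PartialOrder α]
    {f : ℕ → α} {k : ℕ} (hf : ∀ i < k, f (i + 1) ≤ f i) (hk : f k = f 0) {i : ℕ}
    (hi : i ≤ k) : f i = f 0 := by
  have hanti : AntitoneOn f (Set.Iic k) :=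
    antitoneOn_of_add_one_le Set.ordConnected_Iic fun a _ _ ha => hf a ha
  have hk_mem : k ∈ Set.Iic k := Set.mem_Iic.mpr le_rfl
  exact le_antisymm (hanti (Nat.zero_le k) hi (Nat.zero_le i)) (hk ▸ hanti hi hk_mem hi)

theorem exists_hasClosedPath_of_hasClosedPath_iUnion [PartialOrder P] {Δ : ASC V}
    (hD : ∀ σ, D σ ⊆ Δ.faces) (hdisj : Pairwise (Disjoint on D))
    (hlower : ∀ σ, ∀ s ∈ D σ, ∀ t ⊆ s, t.Nonempty → ∃ τ ≤ σ, t ∈ D τ)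
    (hM : ∀ σ, IsMatching (D σ) (M σ)) (h : hasClosedPath (⋃ σ, M σ)) :
    ∃ σ, hasClosedPath (M σ) := by
  obtain ⟨k, α, β, hk, hstep, hcl⟩ := h
  have hpair : ∀ i < k, ∃ σ, (α i, β i) ∈ M σ := fun i hi => Set.mem_iUnion.mp (hstep i hi).1
  have hpiece : ∀ i ≤ k, ∃ σ, α i ∈ D σ := by
    intro i hi
    obtain hi | rfl := hi.lt_or_eq
    · obtain ⟨σ, hσ⟩ := hpair i hi
      exact ⟨σ, ((hM σ).1 _ hσ).1⟩
    · obtain ⟨σ, hσ⟩ := hpair 0 hk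
      exact ⟨σ, hcl ▸ ((hM σ).1 _ hσ).1⟩
  obtain ⟨σ₀, -⟩ := hpiece 0 (Nat.zero_le k)
  have hpiece' : ∀ i, ∃ σ, i ≤ k → α i ∈ D σ := fun i =>
    if hi : i ≤ k then (hpiece i hi).imp fun _ h _ => h else ⟨σ₀, fun h => absurd h hi⟩
  choose f hf using hpiece'
  have hpair_piece : ∀ i < k, ∀ σ, (α i, β i) ∈ M σ → σ = f i := fun i hi σ hσ =>
    eq_of_mem_of_mem_of_pairwise_disjoint hdisj ((hM σ).1 _ hσ).1 (hf i hi.le)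
  have hdesc : ∀ i < k, f (i + 1) ≤ f i := by
    intro i hi
    obtain ⟨σ, hσ⟩ := hpair i hi
    have hβ : β i ∈ D (f i) := hpair_piece i hi σ hσ ▸ ((hM σ).1 _ hσ).2.1
    exact le_of_subset_of_mem hdisj hlower hβ (hstep i hi).2.1 (hf (i + 1) hi)
      (Δ.nonempty_of_mem (hD _ (hf (i + 1) hi)))
  have hcycle : f k = f 0 := eq_of_mem_of_mem_of_pairwise_disjoint hdisj
    (hcl ▸ hf k le_rfl) (hf 0 (Nat.zero_le k))
  refine ⟨f 0, k, α, β, hk, fun i hi => ⟨?_, (hstep i hi).2⟩, hcl⟩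
  obtain ⟨σ, hσ⟩ := hpair i hi
  rwa [hpair_piece i hi σ hσ, apply_eq_apply_zero_of_succ_le_of_apply_eq hdesc hcycle hi.le] at hσ

theorem IsAcyclicMatching.iUnion [PartialOrder P] {Δ : ASC V} (hD : ∀ σ, D σ ⊆ Δ.faces)
    (hdisj : Pairwise (Disjoint on D))
    (hlower : ∀ σ, ∀ s ∈ D σ, ∀ t ⊆ s, t.Nonempty → ∃ τ ≤ σ, t ∈ D τ)
    (hM : ∀ σ, IsAcyclicMatching (D σ) (M σ)) :
    IsAcyclicMatching Δ.faces (⋃ σ, M σ) := by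
  refine ⟨IsMatching.iUnion hD hdisj fun σ => (hM σ).1, fun hcyc => ?_⟩
  obtain ⟨σ, hσ⟩ :=
    exists_hasClosedPath_of_hasClosedPath_iUnion hD hdisj hlower (fun σ => (hM σ).1) hcyc
  exact (hM σ).2 hσ

end ClusterLemma

theorem cluster_lemma_general {V P : Type*} [PartialOrder P] (Δ : ASC V)
    (D : P → Set (Finset V))
    (hD : ∀ σ : P, D σ ⊆ Δ.faces)
    (hpart : ∀ s ∈ Δ.faces, ∃! σ : P, s ∈ D σ)
    (hsub : ∀ σ : P, ∀ s ∈ ⋃ τ ∈ {τ : P | τ ≤ σ}, D τ, ∀ t ⊆ s, t.Nonempty →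
      t ∈ ⋃ τ ∈ {τ : P | τ ≤ σ}, D τ)
    (M : P → Set (Finset V × Finset V))
    (hM : ∀ σ : P, IsAcyclicMatching (D σ) (M σ)) :
    IsAcyclicMatching Δ.faces (⋃ σ : P, M σ) := by
  have hdisj : Pairwise (Disjoint on D) := fun σ τ hστ =>
    Set.disjoint_left.mpr fun s hσ hτ => hστ ((hpart s (hD σ hσ)).unique hσ hτ)
  have hlower : ∀ σ, ∀ s ∈ D σ, ∀ t ⊆ s, t.Nonempty → ∃ τ ≤ σ, t ∈ D τ := by
    intro σ s hs t hts htne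
    have hs' : s ∈ ⋃ τ ∈ {τ : P | τ ≤ σ}, D τ := Set.mem_biUnion le_rfl hs
    simpa only [Set.mem_iUnion, Set.mem_ofPred_eq, exists_prop] using hsub σ s hs' t hts htne
  exact IsAcyclicMatching.iUnion hD hdisj hlower hM

/-- Cluster Lemma: if a simplicial complex is decomposed into
collections `D σ` indexed by a poset `P` with a unique minimal element, each simplex
lying in exactly one `D σ` and each union `⋃_{τ ≤ σ} D τ` being a subcomplex, then a
union of acyclic matchings on the pieces is an acyclic matching on the whole complex. -/
theorem cluster_lemma {V P : Type*} [PartialOrder P] (Δ : ASC V)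
    (D : P → Set (Finset V))
    (hmin : ∃! p : P, ∀ q : P, q ≤ p → q = p)
    (hD : ∀ σ : P, D σ ⊆ Δ.faces)
    (hpart : ∀ s ∈ Δ.faces, ∃! σ : P, s ∈ D σ)
    (hsub : ∀ σ : P, ∀ s ∈ ⋃ τ ∈ {τ : P | τ ≤ σ}, D τ, ∀ t ⊆ s, t.Nonempty →
      t ∈ ⋃ τ ∈ {τ : P | τ ≤ σ}, D τ)
    (M : P → Set (Finset V × Finset V))
    (hM : ∀ σ : P, IsAcyclicMatching (D σ) (M σ)) :
    IsAcyclicMatching Δ.faces (⋃ σ : P, M σ) :=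
  cluster_lemma_general Δ D hD hpart hsub M hM
end
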